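/- arXiv:2312.16213 — 9 statements merged into one kernel-verified Lean document; each statement's English description precedes it below -/
import Mathlib

section
/- For any permutation π of [n], the number of permutations σ of [n] that are adjacent to π (i.e., |π(i) − σ(i)| ≤ 1 for all i, and σ ≠ π) is F_{n+1} − 1, where F_k denotes the k-th Fibonacci number (F_1 = F_2 = 1). -/
open Finset

/-- Two permutations are adjacent if every element's position changes by at most one. -/
def Adjacent {n : ℕ} (π σ : Equiv.Perm (Fin n)) : Prop :=
  ∀ i, ((π i : ℤ) - (σ i : ℤ)).natAbs ≤ 1

/-- Number of times wires `i` and `j` swap in the sequence `T` of height `h`. -/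
def SwapCount {n : ℕ} (T : ℕ → Equiv.Perm (Fin n)) (h : ℕ) (i j : Fin n) : ℕ :=
  ((Finset.range (h - 1)).filter fun t => T t i = T (t+1) j ∧ T t j = T (t+1) i).card

/-- A tangle of height `h`: a nonempty sequence of permutations with consecutive ones adjacent. -/
def IsTangle {n : ℕ} (T : ℕ → Equiv.Perm (Fin n)) (h : ℕ) : Prop :=
  1 ≤ h ∧ ∀ t, t + 1 < h → Adjacent (T t) (T (t+1))

/-- A tangle starting at the identity realizing the list `l`. -/
def Realizes {n : ℕ} (T : ℕ → Equiv.Perm (Fin n)) (h : ℕ) (l : Fin n → Fin n → ℕ) : Prop :=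
  IsTangle T h ∧ T 0 = 1 ∧ ∀ i j, i ≠ j → SwapCount T h i j = l i j

/-- A list is feasible if some tangle starting at the identity realizes it. -/
def Feasible {n : ℕ} (l : Fin n → Fin n → ℕ) : Prop :=
  ∃ h T, Realizes T h l

/-- A list is consistent if the map `id_n L` is a permutation of `[n]`. -/
def Consistent {n : ℕ} (l : Fin n → Fin n → ℕ) : Prop :=
  ∃ ρ : Equiv.Perm (Fin n), ∀ i : Fin n,
    ((i : ℤ) + ((Finset.univ.filter fun j => i < j ∧ Odd (l i j)).card : ℤ)
      - ((Finset.univ.filter fun j => j < i ∧ Odd (l i j)).card : ℤ)) = (ρ i : ℤ)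

theorem Equiv.Perm.apply_inv_self {α : Type*} (f : Equiv.Perm α) (x : α) : f (f⁻¹ x) = x :=
  f.apply_symm_apply x

theorem Equiv.Perm.inv_apply_self {α : Type*} (f : Equiv.Perm α) (x : α) : f⁻¹ (f x) = x :=
  f.symm_apply_apply x

def NearId {n : ℕ} (f : Equiv.Perm (Fin n)) : Prop :=
  ∀ i : Fin n, ((f i : ℤ) - (i : ℤ)).natAbs ≤ 1

instance {n : ℕ} : DecidablePred (@NearId n) := fun _ => by unfold NearId; infer_instance

def Sn (n : ℕ) : Finset (Equiv.Perm (Fin n)) := univ.filter NearId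

def φ₁ {n : ℕ} (g : Equiv.Perm (Fin (n+1))) : Equiv.Perm (Fin (n+2)) :=
  Equiv.Perm.decomposeFin.symm (0, g)

def φ₂ {n : ℕ} (g : Equiv.Perm (Fin n)) : Equiv.Perm (Fin (n+2)) :=
  Equiv.Perm.decomposeFin.symm (1, Equiv.Perm.decomposeFin.symm (0, g))

lemma φ₁_apply_zero {n : ℕ} (g : Equiv.Perm (Fin (n+1))) : φ₁ g 0 = 0 := by
  simp [φ₁, Equiv.Perm.decomposeFin_symm_apply_zero]

lemma φ₁_apply_succ {n : ℕ} (g : Equiv.Perm (Fin (n+1))) (i : Fin (n+1)) :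
    φ₁ g i.succ = (g i).succ := by
  simp [φ₁, Equiv.Perm.decomposeFin_symm_apply_succ]

lemma φ₂_apply_zero {n : ℕ} (g : Equiv.Perm (Fin n)) : φ₂ g 0 = 1 := by
  simp [φ₂, Equiv.Perm.decomposeFin_symm_apply_zero]

lemma φ₂_apply_one {n : ℕ} (g : Equiv.Perm (Fin n)) : φ₂ g 1 = 0 := by
  simp [φ₂, Equiv.Perm.decomposeFin_symm_apply_one,
    Equiv.Perm.decomposeFin_symm_apply_zero, Equiv.swap_apply_right]

lemma φ₂_apply_succ_succ {n : ℕ} (g : Equiv.Perm (Fin n)) (i : Fin n) :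
    φ₂ g i.succ.succ = (g i).succ.succ := by
  rw [φ₂, Equiv.Perm.decomposeFin_symm_apply_succ, Equiv.Perm.decomposeFin_symm_apply_succ]
  simp only [Equiv.swap_self, Equiv.refl_apply]
  rw [Equiv.swap_apply_of_ne_of_ne (Fin.succ_ne_zero _)
    (fun h => Fin.succ_ne_zero (g i) (Fin.succ_injective _ (by rw [h, Fin.succ_zero_eq_one])))]

lemma one_mem_Sn (n : ℕ) : (1 : Equiv.Perm (Fin n)) ∈ Sn n := by
  simp [Sn, NearId]

lemma card_Sn : ∀ n, (Sn n).card = Nat.fib (n + 1) := by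
  intro n
  induction n using Nat.strong_induction_on with
  | _ n ih =>
    match n with
    | 0 => decide
    | 1 => decide
    | (m+2) =>
      have hφ₁inj : Function.Injective (@φ₁ m) := fun a b h => by
        have := Equiv.Perm.decomposeFin.symm.injective h
        exact (Prod.mk.injEq _ _ _ _ ▸ this).2
      have hφ₂inj : Function.Injective (@φ₂ m) := fun a b h => by
        have h1 := Equiv.Perm.decomposeFin.symm.injective h
        have h2 := (Prod.mk.injEq _ _ _ _ ▸ h1).2
        have h3 := Equiv.Perm.decomposeFin.symm.injective h2
        exact (Prod.mk.injEq _ _ _ _ ▸ h3).2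
      have key : Sn (m+2) = (Sn (m+1)).image φ₁ ∪ (Sn m).image φ₂ := by
        ext f
        simp only [mem_union, mem_image, Sn, mem_filter, mem_univ, true_and]
        constructor
        · intro hf
          have h0 : (f 0 : ℕ) ≤ 1 := by have := hf 0; simp at this; omega
          set p : Fin (m+2) := Equiv.Perm.decomposeFin f |>.1 with hp
          set g : Equiv.Perm (Fin (m+1)) := Equiv.Perm.decomposeFin f |>.2 with hg
          have hfd : Equiv.Perm.decomposeFin.symm (p, g) = f := by
            rw [hp, hg]; exact Equiv.Perm.decomposeFin.symm_apply_apply f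
          have hpf : p = f 0 := by
            conv_rhs => rw [← hfd]
            rw [Equiv.Perm.decomposeFin_symm_apply_zero]
          rcases Nat.lt_or_ge (f 0 : ℕ) 1 with h01 | h01
          · -- f 0 = 0
            have hf0 : f 0 = 0 := by
              apply Fin.ext; simpa using Nat.lt_one_iff.mp h01
            left
            have hfd' := hfd
            rw [hpf, hf0] at hfd'
            have hfφ : f = φ₁ g := by rw [φ₁, hfd']
            refine ⟨g, ?_, hfφ.symm⟩
            intro i
            have hfi : f i.succ = (g i).succ := by rw [hfφ]; exact φ₁_apply_succ g i
            have := hf i.succ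
            rw [hfi] at this
            simp only [Fin.val_succ] at this ⊢
            push_cast at this ⊢
            omega
          · -- f 0 = 1
            have hf0 : f 0 = 1 := by
              apply Fin.ext; rw [Fin.val_one]; omega
            have hf1 : f 1 = 0 := by
              have hj := hf (f⁻¹ 0)
              rw [Equiv.Perm.apply_inv_self] at hj
              have hjle : ((f⁻¹ 0 : Fin (m+2)) : ℕ) ≤ 1 := by
                simp at hj; omega
              have hjne : f⁻¹ 0 ≠ 0 := by
                intro h
                have h2 := congrArg f h
                rw [Equiv.Perm.apply_inv_self, hf0] at h2
                exact one_ne_zero h2.symm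
              have : f⁻¹ 0 = 1 := by
                apply Fin.ext; rw [Fin.val_one]
                rcases Nat.lt_or_ge ((f⁻¹ 0 : Fin (m+2)) : ℕ) 1 with h | h
                · exact absurd (Fin.ext (by simpa using Nat.lt_one_iff.mp h)) hjne
                · omega
              rw [← this, Equiv.Perm.apply_inv_self]
            right
            -- decompose h := g further
            set q : Fin (m+1) := Equiv.Perm.decomposeFin g |>.1 with hq
            set g' : Equiv.Perm (Fin m) := Equiv.Perm.decomposeFin g |>.2 with hg'
            have hgd : Equiv.Perm.decomposeFin.symm (q, g') = g := by
              rw [hq, hg']; exact Equiv.Perm.decomposeFin.symm_apply_apply g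
            have hp1 : p = 1 := by rw [hpf, hf0]
            have hq0 : q = 0 := by
              -- f 1 = swap 0 p (g 0).succ = 0
              have h1 : f 1 = Equiv.swap 0 p (g 0).succ := by
                conv_lhs => rw [← hfd]
                exact Equiv.Perm.decomposeFin_symm_apply_one g p
              rw [hf1, hp1] at h1
              have h2 := congrArg (Equiv.swap (0 : Fin (m+2)) 1) h1
              simp only [Equiv.swap_apply_self, Equiv.swap_apply_left] at h2
              have hg0 : g 0 = 0 :=
                Fin.succ_injective _ (by rw [← h2, Fin.succ_zero_eq_one])
              have : q = g 0 := by
                conv_rhs => rw [← hgd]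
                rw [Equiv.Perm.decomposeFin_symm_apply_zero]
              rw [this, hg0]
            have hfeq : f = φ₂ g' := by
              have hfd' := hfd; rw [hp1] at hfd'
              have hgd' := hgd; rw [hq0] at hgd'
              rw [φ₂, hgd', hfd']
            refine ⟨g', ?_, hfeq.symm⟩
            intro i
            have hfi : f i.succ.succ = (g' i).succ.succ := by
              rw [hfeq]; exact φ₂_apply_succ_succ g' i
            have := hf i.succ.succ
            rw [hfi] at this
            simp only [Fin.val_succ] at this ⊢
            push_cast at this ⊢
            omega
        · rintro (⟨g, hg, rfl⟩ | ⟨g, hg, rfl⟩)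
          · intro i
            refine Fin.cases ?_ (fun j => ?_) i
            · rw [φ₁_apply_zero]; simp
            · rw [φ₁_apply_succ]
              have := hg j
              simp only [Fin.val_succ]
              push_cast at this ⊢
              omega
          · intro i
            refine Fin.cases ?_ (fun j => ?_) i
            · rw [φ₂_apply_zero]; simp
            · refine Fin.cases ?_ (fun k => ?_) j
              · rw [Fin.succ_zero_eq_one, φ₂_apply_one]; simp
              · rw [φ₂_apply_succ_succ]
                have := hg k
                simp only [Fin.val_succ]
                push_cast at this ⊢
                omega
      have hdisj : Disjoint ((Sn (m+1)).image φ₁) ((Sn m).image φ₂) := by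
        rw [Finset.disjoint_left]
        rintro f hf1 hf2
        simp only [mem_image] at hf1 hf2
        obtain ⟨g1, _, rfl⟩ := hf1
        obtain ⟨g2, _, h⟩ := hf2
        have h0 : φ₂ g2 0 = φ₁ g1 0 := by rw [h]
        rw [φ₁_apply_zero, φ₂_apply_zero] at h0
        exact one_ne_zero h0
      rw [key, Finset.card_union_of_disjoint hdisj,
        Finset.card_image_of_injective _ hφ₁inj, Finset.card_image_of_injective _ hφ₂inj,
        ih (m+1) (by omega), ih m (by omega)]
      have e2 : m + 2 + 1 = m + 1 + 2 := by omega
      rw [e2, Nat.fib_add_two (n := m + 1)]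
      have e1 : m + 1 + 1 = m + 2 := by omega
      rw [e1]
      omega

/-- The number of permutations adjacent to (and distinct from) π is F_{n+1} - 1. -/
theorem num_adjacent_permutations (n : ℕ) (π : Equiv.Perm (Fin n)) :
    {σ : Equiv.Perm (Fin n) | Adjacent π σ ∧ σ ≠ π}.ncard = Nat.fib (n + 1) - 1 := by
  have hset : {σ : Equiv.Perm (Fin n) | Adjacent π σ ∧ σ ≠ π}
      = ↑(((Sn n).erase 1).image (· * π)) := by
    ext σ
    simp only [Set.mem_setOf_eq, Finset.coe_image, Set.mem_image, Finset.mem_coe,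
      Finset.mem_erase, Sn, mem_filter, mem_univ, true_and]
    constructor
    · rintro ⟨hadj, hne⟩
      refine ⟨σ * π⁻¹, ⟨?_, ?_⟩, by group⟩
      · intro h
        apply hne
        have := congrArg (· * π) h
        simpa [mul_assoc] using this
      · intro j
        have h := hadj (π⁻¹ j)
        rw [Equiv.Perm.apply_inv_self] at h
        simp only [Equiv.Perm.mul_apply, Equiv.Perm.inv_apply_self]
        omega
    · rintro ⟨f, ⟨hne, hf⟩, rfl⟩
      constructor
      · intro i
        have h := hf (π i)
        simp only [Equiv.Perm.mul_apply] at h ⊢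
        omega
      · intro h
        exact hne (mul_right_cancel (by rw [h, one_mul]))
  rw [hset, Set.ncard_coe_finset,
    Finset.card_image_of_injective _ (mul_left_injective π),
    Finset.card_erase_of_mem (one_mem_Sn n), card_Sn]
end

section
/- The set P(π) consisting of a permutation π of [n] together with all permutations adjacent to π has cardinality exactly F_{n+1}, the (n+1)-st Fibonacci number. -/
open Finset

def AF (n : ℕ) : Finset (Equiv.Perm (Fin n)) :=
  Finset.univ.filter fun τ => ∀ j, ((τ j : ℤ) - (j : ℤ)).natAbs ≤ 1

lemma mem_AF {n : ℕ} {τ : Equiv.Perm (Fin n)} :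
    τ ∈ AF n ↔ ∀ j, ((τ j : ℤ) - (j : ℤ)).natAbs ≤ 1 := by
  simp [AF]

lemma AF_zero : (AF 0).card = 1 := by
  rw [show AF 0 = Finset.univ from by ext τ; simp [AF]]
  simp

lemma AF_one : (AF 1).card = 1 := by
  rw [show AF 1 = Finset.univ from ?_]
  · simp
  · ext τ
    simp only [mem_AF, Finset.mem_univ, iff_true]
    intro j
    rw [Subsingleton.elim (τ j) j]
    omega

lemma decomposeFin_fst {n : ℕ} (τ : Equiv.Perm (Fin (n + 1))) :
    (Equiv.Perm.decomposeFin τ).1 = τ 0 := by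
  conv_rhs => rw [← Equiv.symm_apply_apply Equiv.Perm.decomposeFin τ]
  rw [← Prod.mk.eta (p := Equiv.Perm.decomposeFin τ),
    Equiv.Perm.decomposeFin_symm_apply_zero]

lemma decompose_eq {n : ℕ} (τ : Equiv.Perm (Fin (n + 1))) :
    Equiv.Perm.decomposeFin.symm (τ 0, (Equiv.Perm.decomposeFin τ).2) = τ := by
  rw [← decomposeFin_fst]
  exact Equiv.symm_apply_apply _ _

lemma apply_succ {n : ℕ} (τ : Equiv.Perm (Fin (n + 1))) (i : Fin n) :
    τ i.succ = Equiv.swap 0 (τ 0) (((Equiv.Perm.decomposeFin τ).2) i).succ := by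
  conv_lhs => rw [← decompose_eq τ]
  rw [Equiv.Perm.decomposeFin_symm_apply_succ]

lemma swap01_big {n : ℕ} (x : Fin (n + 2)) (hx : (2:ℕ) ≤ x.val) :
    Equiv.swap 0 1 x = x := by
  apply Equiv.swap_apply_of_ne_of_ne
  · intro h; rw [h] at hx; simp at hx
  · intro h; rw [h, Fin.val_one] at hx; omega

noncomputable def Phi {n : ℕ} (g : Equiv.Perm (Fin n)) : Equiv.Perm (Fin (n + 2)) :=
  Equiv.Perm.decomposeFin.symm (1, Equiv.Perm.decomposeFin.symm (0, g))

lemma Phi_zero {n : ℕ} (g : Equiv.Perm (Fin n)) : Phi g 0 = 1 := by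
  simp [Phi]

lemma Phi_one {n : ℕ} (g : Equiv.Perm (Fin n)) : Phi g 1 = 0 := by
  simp [Phi, Equiv.Perm.decomposeFin_symm_apply_one]

lemma Phi_succ_succ {n : ℕ} (g : Equiv.Perm (Fin n)) (k : Fin n) :
    Phi g k.succ.succ = (g k).succ.succ := by
  rw [Phi, Equiv.Perm.decomposeFin_symm_apply_succ,
    Equiv.Perm.decomposeFin_symm_apply_succ]
  rw [Equiv.swap_self]
  simp only [Equiv.refl_apply]
  exact swap01_big _ (by simp [Fin.val_succ])

lemma key {n : ℕ} (τ : Equiv.Perm (Fin (n + 2)))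
    (hA : ∀ j, ((τ j : ℤ) - (j : ℤ)).natAbs ≤ 1) (h0 : τ 0 = 1) :
    τ = Phi ((Equiv.Perm.decomposeFin ((Equiv.Perm.decomposeFin τ).2)).2) := by
  have h1 : τ 1 = 0 := by
    have hj : τ (τ.symm 0) = 0 := τ.apply_symm_apply 0
    have := hA (τ.symm 0)
    rw [hj] at this
    have hval : (τ.symm 0 : ℕ) ≤ 1 := by simp at this; omega
    have h01 : τ.symm 0 = 0 ∨ τ.symm 0 = 1 := by
      rcases Nat.le_one_iff_eq_zero_or_eq_one.mp hval with h | h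
      · left; exact Fin.ext (by simpa using h)
      · right; exact Fin.ext (by simpa using h)
    rcases h01 with h | h
    · rw [h] at hj; rw [hj] at h0; exact absurd h0 (by simp)
    · rw [h] at hj; exact hj
  set e := (Equiv.Perm.decomposeFin τ).2 with he
  have he0 : e 0 = 0 := by
    have := apply_succ τ 0
    rw [Fin.succ_zero_eq_one, h1, h0] at this
    have h2 : (e 0).succ = Equiv.swap (0 : Fin (n+2)) 1 0 := by
      have := congrArg (Equiv.swap (0 : Fin (n+2)) 1) this.symm
      rwa [Equiv.swap_apply_self] at this
    rw [Equiv.swap_apply_left] at h2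
    have : (e 0).succ = Fin.succ 0 := by rw [h2, Fin.succ_zero_eq_one]
    exact Fin.succ_injective _ this
  have hee : Equiv.Perm.decomposeFin.symm (0, (Equiv.Perm.decomposeFin e).2) = e := by
    rw [← he0]; exact decompose_eq e
  rw [Phi, hee, ← h0, he]
  exact (decompose_eq τ).symm

lemma AF_rec (n : ℕ) : (AF (n + 2)).card = (AF (n + 1)).card + (AF n).card := by
  classical
  have hsplit := Finset.card_filter_add_card_filter_not
    (s := AF (n+2)) (p := fun τ => τ 0 = 0)
  rw [← hsplit]
  congr 1
  · -- τ 0 = 0 case ↔ AF (n+1)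
    apply Finset.card_bij' (i := fun τ _ => (Equiv.Perm.decomposeFin τ).2)
      (j := fun e _ => Equiv.Perm.decomposeFin.symm (0, e))
    · intro τ hτ
      rw [Finset.mem_filter, mem_AF] at hτ
      obtain ⟨hA, h0⟩ := hτ
      rw [mem_AF]
      intro i
      have := apply_succ τ i
      rw [h0, Equiv.swap_self] at this
      simp only [Equiv.refl_apply] at this
      have h2 := hA i.succ
      rw [this] at h2
      simp only [Fin.val_succ] at h2
      push_cast at h2 ⊢
      omega
    · intro e he
      rw [mem_AF] at he
      rw [Finset.mem_filter, mem_AF]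
      refine ⟨fun j => ?_, by simp⟩
      induction j using Fin.cases with
      | zero => simp
      | succ i =>
        rw [Equiv.Perm.decomposeFin_symm_apply_succ, Equiv.swap_self]
        simp only [Equiv.refl_apply, Fin.val_succ]
        have := he i
        push_cast at this ⊢
        omega
    · intro τ hτ
      rw [Finset.mem_filter] at hτ
      rw [← hτ.2]
      exact decompose_eq τ
    · intro e _
      simp
  · -- τ 0 ≠ 0 case ↔ AF n
    have hfe : (AF (n+2)).filter (fun τ => ¬ τ 0 = 0)
        = (AF (n+2)).filter (fun τ => τ 0 = 1) := by
      apply Finset.filter_congr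
      intro τ hτ
      rw [mem_AF] at hτ
      have h00 := hτ 0
      simp at h00
      constructor
      · intro h
        have hv : ¬ (τ 0 : ℕ) = 0 := fun hh => h (Fin.ext (by simpa using hh))
        refine Fin.ext ?_
        rw [Fin.val_one]
        omega
      · intro h hh
        rw [hh] at h
        exact absurd h (by simp)
    rw [hfe]
    apply Finset.card_bij'
      (i := fun τ _ => (Equiv.Perm.decomposeFin ((Equiv.Perm.decomposeFin τ).2)).2)
      (j := fun g _ => Phi g)
    · intro τ hτ
      rw [Finset.mem_filter, mem_AF] at hτ
      obtain ⟨hA, h0⟩ := hτ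
      rw [mem_AF]
      intro k
      have hk := hA k.succ.succ
      rw [key τ hA h0, Phi_succ_succ] at hk
      simp only [Fin.val_succ] at hk
      push_cast at hk ⊢
      omega
    · intro g hg
      rw [mem_AF] at hg
      rw [Finset.mem_filter, mem_AF]
      refine ⟨fun j => ?_, Phi_zero g⟩
      induction j using Fin.cases with
      | zero => rw [Phi_zero]; simp
      | succ i =>
        induction i using Fin.cases with
        | zero =>
          rw [Fin.succ_zero_eq_one, Phi_one]
          simp
        | succ k =>
          rw [Phi_succ_succ]
          simp only [Fin.val_succ]
          have := hg k
          push_cast at this ⊢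
          omega
    · intro τ hτ
      rw [Finset.mem_filter, mem_AF] at hτ
      exact (key τ hτ.1 hτ.2).symm
    · intro g _
      simp [Phi]

lemma cardAF : ∀ n, (AF n).card = Nat.fib (n + 1)
  | 0 => AF_zero
  | 1 => AF_one
  | (n + 2) => by
    have h := Nat.fib_add_two (n := n+1)
    rw [AF_rec, cardAF (n+1), cardAF n]
    rw [show n+2+1 = n+1+2 from rfl, h, show n+1+1 = n+2 from rfl]
    omega

/-- The set P(π) of π together with all permutations adjacent to π has cardinality F_{n+1}. -/
theorem card_P_pi (n : ℕ) (π : Equiv.Perm (Fin n)) :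
    {σ : Equiv.Perm (Fin n) | σ = π ∨ Adjacent π σ}.ncard = Nat.fib (n + 1) := by
  classical
  have hset : {σ : Equiv.Perm (Fin n) | σ = π ∨ Adjacent π σ}
      = ↑((AF n).image (fun τ => τ * π)) := by
    ext σ
    simp only [Set.mem_setOf_eq, Finset.coe_image, Set.mem_image, Finset.mem_coe, mem_AF]
    constructor
    · intro h
      have hadj : Adjacent π σ := by
        rcases h with h | h
        · subst h; intro i; simp
        · exact h
      refine ⟨σ * π⁻¹, fun j => ?_, inv_mul_cancel_right σ π⟩
      have h2 := hadj (π⁻¹ j)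
      rw [show π (π⁻¹ j) = j from π.apply_symm_apply j] at h2
      simp only [Equiv.Perm.mul_apply]
      omega
    · rintro ⟨τ, hτ, rfl⟩
      right
      intro i
      have := hτ (π i)
      simp only [Equiv.Perm.mul_apply]
      omega
  rw [hset, Set.ncard_coe_finset,
    Finset.card_image_of_injective _ (mul_left_injective π), cardAF]
end

section
/- If two permutations π and σ of [n] are adjacent, then the set {i ∈ [n] : π(i) ≠ σ(i)} splits into disjoint pairs {i, j} such that π(i) = σ(j) and π(j) = σ(i). -/
open Finset

/-!
Write `g = π * σ⁻¹`; adjacency of `π` and `σ` says exactly that `g` moves every position by at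
most one. Such a `g` is an involution: if `g p = p + 1`, then `g` maps the `p + 1` positions
`k` with `g k ≤ p` into `{0, …, p + 1} \ {p}`, a set of the same size, so `g (p + 1) ≤ p`,
forcing `g (p + 1) = p`. Thus `f = σ⁻¹ * π`, a conjugate of `g`, pairs up the elements on
which `π` and `σ` differ.
-/

namespace Adjacent

variable {n : ℕ} {π σ : Equiv.Perm (Fin n)}

theorem symm (h : Adjacent π σ) : Adjacent σ π := fun i => by
  have := h i
  omega

theorem mul_right (h : Adjacent π σ) (τ : Equiv.Perm (Fin n)) : Adjacent (π * τ) (σ * τ) :=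
  fun i => h (τ i)

theorem inv_of_one (h : Adjacent π 1) : Adjacent π⁻¹ 1 := by
  simpa using (h.mul_right π⁻¹).symm

theorem apply_apply_of_apply_eq_succ (h : Adjacent π 1) {p : Fin n}
    (hp : (π p : ℕ) = p + 1) : π (π p) = p := by
  have hbound : ∀ k, ((π k : ℤ) - (k : ℤ)).natAbs ≤ 1 := h
  set S := (Iic p).map π.symm.toEmbedding
  have hmem : ∀ k, k ∈ S ↔ π k ≤ p := by simp [S]
  have hsub : S ⊆ (Iic (π p)).erase p := by
    intro k hk
    have hk : (π k : ℕ) ≤ p := (hmem k).1 hk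
    have hkp : k ≠ p := by
      rintro rfl
      omega
    have := hbound k
    rw [mem_erase, mem_Iic, Fin.le_def]
    exact ⟨hkp, by omega⟩
  have hp_le : p ≤ π p := by
    rw [Fin.le_def]
    omega
  have hp_mem : π p ∈ (Iic (π p)).erase p := by
    simp only [mem_erase, mem_Iic, ne_eq, Fin.ext_iff, le_refl, and_true]
    omega
  have hcard : #((Iic (π p)).erase p) ≤ #S := by
    rw [card_erase_of_mem (mem_Iic.2 hp_le), Fin.card_Iic, card_map, Fin.card_Iic, hp]
    omega
  have hle : π (π p) ≤ p := (hmem _).1 (eq_of_subset_of_card_le hsub hcard ▸ hp_mem)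
  have := hbound (π p)
  rw [Fin.le_def] at hle
  exact Fin.ext (by omega)

theorem involutive (h : Adjacent π 1) : Function.Involutive π := by
  intro p
  have hp : ((π p : ℤ) - (p : ℤ)).natAbs ≤ 1 := h p
  rcases (by omega : (π p : ℕ) = p ∨ (π p : ℕ) = p + 1 ∨ (p : ℕ) = π p + 1)
    with hfix | hup | hdown
  · rw [Fin.ext hfix, Fin.ext hfix]
  · exact h.apply_apply_of_apply_eq_succ hup
  · have hinv : π⁻¹ (π p) = p := π.symm_apply_apply p
    have := h.inv_of_one.apply_apply_of_apply_eq_succ (p := π p) (by rw [hinv]; exact hdown)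
    rw [hinv, Equiv.Perm.inv_eq_iff_eq] at this
    exact this.symm

theorem apply_inv_apply_apply (h : Adjacent π σ) (i : Fin n) : π (σ⁻¹ (π i)) = σ i := by
  have hg : Adjacent (π * σ⁻¹) 1 := by simpa using h.mul_right σ⁻¹
  simpa using hg.involutive (σ i)

end Adjacent

/-- If π and σ are adjacent, the set of elements where they differ splits into pairs
    {i, f i} with π i = σ (f i) and π (f i) = σ i. -/
theorem adjacent_splits_into_pairs (n : ℕ) (π σ : Equiv.Perm (Fin n))
    (h : Adjacent π σ) :
    ∃ f : Fin n → Fin n, ∀ i, π i ≠ σ i →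
      f i ≠ i ∧ f (f i) = i ∧ π i = σ (f i) ∧ π (f i) = σ i := by
  refine ⟨fun i => σ⁻¹ (π i), fun i hi => ⟨?_, ?_, ?_, h.apply_inv_apply_apply i⟩⟩
  · exact fun hfix => hi (Equiv.Perm.inv_eq_iff_eq.1 hfix)
  · show σ⁻¹ (π (σ⁻¹ (π i))) = i
    rw [h.apply_inv_apply_apply]
    exact σ.symm_apply_apply i
  · exact (σ.apply_symm_apply (π i)).symm
end

section
/- For every permutation π of [n], applying the map id_n L(π) to each i ∈ [n] yields π(i); that is, i + |{j : i < j ≤ n and π(i) > π(j)}| − |{j : 1 ≤ j < i and π(i) < π(j)}| = π(i) for all i ∈ [n]. -/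
open Finset

/-
Let `A = {j | j < i}` and `B = {j | π j < π i}`. Since `π` is a bijection, `|A| = i` and
`|B| = π i`, while `B \ A` and `A \ B` are exactly the two inversion sets in the statement
(for `A \ B` by injectivity of `π`). Hence `i + |B \ A| - |A \ B| = i + |B| - |A| = π i`.
-/

theorem Finset.natCast_card_sub_natCast_card {α : Type*} [DecidableEq α] (s t : Finset α) :
    (#t : ℤ) - #s = #(t \ s) - #(s \ t) := by
  have hs := card_sdiff_add_card_inter s t
  have ht := card_sdiff_add_card_inter t s
  rw [inter_comm] at ht
  omega

theorem Fin.card_filter_lt {n : ℕ} (m : Fin n) : #{k | k < m} = m := by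
  rw [filter_gt_eq_Iio, Fin.card_Iio]

namespace Equiv.Perm

variable {α : Type*} [Fintype α] [LinearOrder α] (π : Perm α) (i : α)

theorem card_filter_apply_lt : #{j | π j < π i} = #{k | k < π i} :=
  card_equiv π (by simp)

theorem filter_apply_lt_sdiff_filter_lt :
    ({j | π j < π i} : Finset α) \ ({j | j < i} : Finset α) =
      ({j | i < j ∧ π j < π i} : Finset α) := by
  ext j
  simp only [mem_sdiff, mem_filter, mem_univ, true_and, not_lt]
  constructor
  · rintro ⟨hπ, hij⟩
    exact ⟨hij.lt_of_ne (by rintro rfl; exact hπ.false), hπ⟩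
  · rintro ⟨hij, hπ⟩
    exact ⟨hπ, hij.le⟩

theorem filter_lt_sdiff_filter_apply_lt :
    ({j | j < i} : Finset α) \ ({j | π j < π i} : Finset α) =
      ({j | j < i ∧ π i < π j} : Finset α) := by
  ext j
  simp only [mem_sdiff, mem_filter, mem_univ, true_and, not_lt]
  constructor
  · rintro ⟨hji, hπ⟩
    exact ⟨hji, hπ.lt_of_ne (π.injective.ne hji.ne')⟩
  · rintro ⟨hji, hπ⟩
    exact ⟨hji, hπ.le⟩

theorem card_inversions_sub_card_inversions :
    (#{j | i < j ∧ π j < π i} : ℤ) - #{j | j < i ∧ π i < π j} =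
      #{j | π j < π i} - #{j | j < i} := by
  rw [natCast_card_sub_natCast_card ({j | j < i} : Finset α), filter_apply_lt_sdiff_filter_lt,
    filter_lt_sdiff_filter_apply_lt]

end Equiv.Perm

/-- Applying the map id_n L(π) to any i yields π i. -/
theorem idn_Lpi_eq (n : ℕ) (π : Equiv.Perm (Fin n)) (i : Fin n) :
    ((i : ℤ) + ((Finset.univ.filter fun j => i < j ∧ π j < π i).card : ℤ)
      - ((Finset.univ.filter fun j => j < i ∧ π i < π j).card : ℤ)) = (π i : ℤ) := by
  have h := π.card_inversions_sub_card_inversions i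
  rw [π.card_filter_apply_lt, Fin.card_filter_lt, Fin.card_filter_lt] at h
  omega
end

section
/- For every permutation π of [n], L(π) is the unique simple list L (symmetric 0/1 matrix with zero diagonal) such that the map id_n L equals π; that is, if L = (l_{ij}) is simple and for all i ∈ [n], i + |{j : i < j ≤ n, l_{ij} = 1}| − |{j : 1 ≤ j < i, l_{ij} = 1}| = π(i), then l_{ij} = 1 exactly when i < j and π(i) > π(j). -/
open Finset

/-!
Treat the indices in decreasing order of their images under `π`. Once the rows of all `k` with
`π k > π i` are known to be those of `L(π)`, symmetry forces the right partners of `i` to lie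
among the `j > i` with `π j < π i`, and its left partners to include every `j < i` with
`π j > π i`. Since `L(π)` itself satisfies `id_n L(π) = π`, the hypothesis on `i` turns both
inclusions into equalities.
-/

theorem Equiv.Perm.card_filter_apply_lt_apply {n : ℕ} (π : Equiv.Perm (Fin n)) (i : Fin n) :
    #{j | π j < π i} = π i := by
  rw [← Fin.card_Iio (π i)]
  exact card_equiv π (by simp)

theorem Equiv.Perm.val_add_card_right_inversions_eq {n : ℕ} (π : Equiv.Perm (Fin n)) (i : Fin n) :
    (i : ℕ) + #{j | i < j ∧ π j < π i} = π i + #{j | j < i ∧ π i < π j} := by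
  have below : #{j | j < i ∧ π j < π i} + #{j | j < i ∧ π i < π j} = i := by
    rw [← Fin.card_Iio i, ← filter_gt_eq_Iio,
      ← card_filter_add_card_filter_not (s := {j | j < i}) (fun j => π j < π i),
      filter_filter, filter_filter]
    congr 2; ext j; simp only [mem_filter, mem_univ, true_and, not_lt]
    refine and_congr_right fun hj => ⟨fun h => h.le, fun h => h.lt_of_ne ?_⟩
    exact fun h => hj.ne (π.injective h).symm
  have smaller : #{j | i < j ∧ π j < π i} + #{j | j < i ∧ π j < π i} = π i := by
    rw [← π.card_filter_apply_lt_apply i,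
      ← card_filter_add_card_filter_not (s := {j | π j < π i}) (fun j => i < j),
      filter_filter, filter_filter]
    congr 2 <;> ext j <;> simp only [mem_filter, mem_univ, true_and, not_lt]
    · exact and_comm
    · refine ⟨fun h => ⟨h.2, h.1.le⟩, fun h => ⟨h.2.lt_of_ne ?_, h.1⟩⟩
      rintro rfl; exact h.1.false
  omega

section SymmetricRelation

variable {n : ℕ} {π : Equiv.Perm (Fin n)} {r : Fin n → Fin n → Prop} [DecidableRel r]

theorem rel_iff_lt_of_apply_lt_of_forall_apply_gt (hsym : ∀ i j, r i j → r j i) {i : Fin n}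
    (hmap : (i : ℤ) + #{j | i < j ∧ r i j} - #{j | j < i ∧ r i j} = π i)
    (higher : ∀ k, π i < π k → ∀ j, π j < π k → (r k j ↔ k < j))
    {j : Fin n} (hj : π j < π i) : r i j ↔ i < j := by
  have count := π.val_add_card_right_inversions_eq i
  set relRight : Finset (Fin n) := {j | i < j ∧ r i j} with hRR
  set relLeft : Finset (Fin n) := {j | j < i ∧ r i j} with hRL
  set invRight : Finset (Fin n) := {j | i < j ∧ π j < π i} with hIR
  set invLeft : Finset (Fin n) := {j | j < i ∧ π i < π j} with hIL
  have right : relRight ⊆ invRight := by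
    intro j
    simp only [hRR, hIR, mem_filter, mem_univ, true_and, and_imp]
    refine fun hij hr => ⟨hij, lt_of_not_ge fun hle => ?_⟩
    have hlt : π i < π j := hle.lt_of_ne fun h => hij.ne (π.injective h)
    exact hij.not_gt ((higher j hlt i hlt).1 (hsym i j hr))
  have left : invLeft ⊆ relLeft := by
    intro j
    simp only [hRL, hIL, mem_filter, mem_univ, true_and, and_imp]
    exact fun hji hlt => ⟨hji, hsym j i ((higher j hlt i hlt).2 hji)⟩
  have card_right := card_le_card right
  have card_left := card_le_card left
  have right_eq := eq_of_subset_of_card_le right (by omega)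
  have left_eq := eq_of_subset_of_card_le left (by omega)
  constructor
  · intro hr
    by_contra hij
    have hji : j < i := lt_of_le_of_ne (not_lt.1 hij) fun h => hj.ne (congrArg π h)
    have : j ∈ invLeft := by rw [left_eq, hRL]; simp [hji, hr]
    exact (mem_filter.1 this).2.2.not_gt hj
  · intro hij
    have : j ∈ relRight := by rw [right_eq, hIR]; simp [hij, hj]
    exact (mem_filter.1 this).2.2

theorem rel_iff_lt_of_apply_lt (hsym : ∀ i j, r i j → r j i)
    (hmap : ∀ i : Fin n, (i : ℤ) + #{j | i < j ∧ r i j} - #{j | j < i ∧ r i j} = π i)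
    (i : Fin n) {j : Fin n} (hj : π j < π i) : r i j ↔ i < j := by
  induction i using (InvImage.wf π wellFounded_gt).induction generalizing j with
  | _ i ih =>
    exact rel_iff_lt_of_apply_lt_of_forall_apply_gt hsym (hmap i) (fun k hk _ => ih k hk) hj

end SymmetricRelation

theorem Lpi_unique_general (n : ℕ) (π : Equiv.Perm (Fin n)) (l : Fin n → Fin n → ℕ)
    (hsym : ∀ i j, l i j = l j i)
    (hmap : ∀ i : Fin n,
      ((i : ℤ) + ((Finset.univ.filter fun j => i < j ∧ l i j = 1).card : ℤ)
        - ((Finset.univ.filter fun j => j < i ∧ l i j = 1).card : ℤ)) = (π i : ℤ)) :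
    ∀ i j : Fin n, i < j → (l i j = 1 ↔ π j < π i) := by
  have row := rel_iff_lt_of_apply_lt (r := fun i j => l i j = 1)
    (fun i j h => (hsym i j).symm.trans h) hmap
  intro i j hij
  rcases lt_trichotomy (π j) (π i) with hlt | heq | hgt
  · simpa [hij, hlt] using row i hlt
  · exact absurd (π.injective heq) hij.ne'
  · simpa [hsym i j, hij.not_gt, hgt.not_gt] using row j hgt

/-- L(π) is the unique simple list L with id_n L = π. -/
theorem Lpi_unique (n : ℕ) (π : Equiv.Perm (Fin n)) (l : Fin n → Fin n → ℕ)
    (hsym : ∀ i j, l i j = l j i) (hdiag : ∀ i, l i i = 0)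
    (hsimple : ∀ i j, l i j ≤ 1)
    (hmap : ∀ i : Fin n,
      ((i : ℤ) + ((Finset.univ.filter fun j => i < j ∧ l i j = 1).card : ℤ)
        - ((Finset.univ.filter fun j => j < i ∧ l i j = 1).card : ℤ)) = (π i : ℤ)) :
    ∀ i j : Fin n, i < j → (l i j = 1 ↔ π j < π i) :=
  Lpi_unique_general n π l hsym hmap
end

section
/- A simple list L of order n is feasible (realizable by a tangle starting at the identity permutation) if and only if L is consistent, i.e., the map id_n L : [n] → ℤ is a permutation of [n]. -/
open Finset

namespace ST
variable {n : ℕ}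

lemma strictmono_of_succ (f : Fin n → Fin n)
    (h : ∀ k (hk : k + 1 < n), f ⟨k, by omega⟩ < f ⟨k+1, hk⟩) : StrictMono f := by
  have key : ∀ m (hm : m < n) (a : Fin n), a.val < m → f a < f ⟨m, hm⟩ := by
    intro m
    induction m with
    | zero => intro hm a ha; exact absurd ha (by omega)
    | succ k ihk =>
      intro hm a ha
      rcases Nat.lt_or_ge a.val k with h' | h'
      · exact (ihk (by omega) a h').trans (h k hm)
      · have he : a = ⟨k, by omega⟩ := Fin.ext (by simp; omega)
        rw [he]; exact h k hm
  intro a b hab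
  have := key b.val b.isLt a hab
  simpa using this

lemma descent_ex (ρ π : Equiv.Perm (Fin n)) (h : π ≠ ρ) :
    ∃ ab : Fin n × Fin n, ((π ab.1 : ℕ) + 1 = (π ab.2 : ℕ)) ∧ ρ ab.2 < ρ ab.1 := by
  by_contra hc
  push_neg at hc
  have hmono : StrictMono (fun p : Fin n => ρ (π.symm p)) := by
    apply strictmono_of_succ
    intro k hk
    set a := π.symm ⟨k, by omega⟩ with ha
    set b := π.symm ⟨k+1, hk⟩ with hb
    have h1 : ((π a : ℕ)) + 1 = (π b : ℕ) := by
      rw [ha, hb]; simp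
    have h2 := hc (a, b) h1
    have hne : ρ b ≠ ρ a := by
      intro e
      have hba : b = a := ρ.injective e
      rw [hba] at h1
      omega
    exact lt_of_le_of_ne h2 (Ne.symm hne)
  have hrange : Set.range (fun p : Fin n => ρ (π.symm p)) = Set.range (id : Fin n → Fin n) := by
    rw [Set.range_id]
    exact (ρ.surjective.comp π.symm.surjective).range_eq
  haveI : WellFoundedLT (Fin n) := inferInstance
  have heq : (fun p : Fin n => ρ (π.symm p)) = id :=
    (StrictMono.range_inj (β := Fin n) (γ := Fin n) hmono strictMono_id).mp hrange
  apply h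
  apply Equiv.ext
  intro x
  have := congrFun heq (π x)
  simp at this
  exact this.symm

noncomputable def nextP (ρ π : Equiv.Perm (Fin n)) : Equiv.Perm (Fin n) :=
  if h : π = ρ then π
  else π.trans (Equiv.swap (π (descent_ex ρ π h).choose.1) (π (descent_ex ρ π h).choose.2))

lemma nextP_fix (ρ : Equiv.Perm (Fin n)) : nextP ρ ρ = ρ := dif_pos rfl

lemma nextP_spec (ρ π : Equiv.Perm (Fin n)) (h : π ≠ ρ) :
    ∃ a b : Fin n, ((π a : ℕ) + 1 = (π b : ℕ)) ∧ ρ b < ρ a ∧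
      nextP ρ π a = π b ∧ nextP ρ π b = π a ∧
      (∀ x, x ≠ a → x ≠ b → nextP ρ π x = π x) := by
  obtain ⟨h1, h2⟩ := (descent_ex ρ π h).choose_spec
  refine ⟨(descent_ex ρ π h).choose.1, (descent_ex ρ π h).choose.2, h1, h2, ?_, ?_, ?_⟩
  · unfold nextP; rw [dif_neg h]
    simp [Equiv.trans_apply]
  · unfold nextP; rw [dif_neg h]
    simp [Equiv.trans_apply]
  · intro x hxa hxb
    unfold nextP; rw [dif_neg h]
    simp only [Equiv.trans_apply]
    apply Equiv.swap_apply_of_ne_of_ne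
    · exact fun e => hxa (π.injective e)
    · exact fun e => hxb (π.injective e)

lemma nextP_adj (ρ π : Equiv.Perm (Fin n)) : Adjacent π (nextP ρ π) := by
  by_cases h : π = ρ
  · unfold nextP; rw [dif_pos h]
    intro i; simp
  · obtain ⟨a, b, h1, h2, e1, e2, e3⟩ := nextP_spec ρ π h
    intro i
    by_cases hia : i = a
    · subst hia
      rw [e1]
      have hv : ((π i : ℕ) : ℤ) + 1 = ((π b : ℕ) : ℤ) := by exact_mod_cast h1
      omega
    · by_cases hib : i = b
      · subst hib
        rw [e2]
        have hv : ((π a : ℕ) : ℤ) + 1 = ((π i : ℕ) : ℤ) := by exact_mod_cast h1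
        omega
      · rw [e3 i hia hib]
        simp

def invc (ρ π : Equiv.Perm (Fin n)) : ℕ :=
  (univ.filter fun xy : Fin n × Fin n =>
    xy.1 < xy.2 ∧ (π xy.1 < π xy.2 ↔ ρ xy.2 < ρ xy.1)).card

lemma invc_facts (ρ π : Equiv.Perm (Fin n)) (h : π ≠ ρ) :
    invc ρ (nextP ρ π) < invc ρ π := by
  classical
  obtain ⟨a, b, h1, h2, e1, e2, e3⟩ := nextP_spec ρ π h
  set σ := nextP ρ π with hσ
  have hπab : π a < π b := Fin.lt_def.mpr (by omega)
  have hab : a ≠ b := fun e => by rw [e] at h1; omega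
  set e : Fin n × Fin n := if a < b then (a, b) else (b, a) with he
  have hecases : (e = (a, b) ∧ a < b) ∨ (e = (b, a) ∧ b < a) := by
    by_cases h' : a < b
    · left; exact ⟨if_pos h', h'⟩
    · right; exact ⟨if_neg h', lt_of_le_of_ne (not_lt.mp h') (Ne.symm hab)⟩
  have hmem : e ∈ univ.filter (fun xy : Fin n × Fin n =>
      xy.1 < xy.2 ∧ (π xy.1 < π xy.2 ↔ ρ xy.2 < ρ xy.1)) := by
    rw [Finset.mem_filter]
    rcases hecases with ⟨he', hlt⟩ | ⟨he', hlt⟩ <;> rw [he']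
    · exact ⟨Finset.mem_univ _, hlt, iff_of_true hπab h2⟩
    · exact ⟨Finset.mem_univ _, hlt, iff_of_false (asymm hπab) (asymm h2)⟩
  have hset : univ.filter (fun xy : Fin n × Fin n =>
        xy.1 < xy.2 ∧ (σ xy.1 < σ xy.2 ↔ ρ xy.2 < ρ xy.1))
      = (univ.filter (fun xy : Fin n × Fin n =>
        xy.1 < xy.2 ∧ (π xy.1 < π xy.2 ↔ ρ xy.2 < ρ xy.1))).erase e := by
    ext ⟨x, y⟩
    rw [Finset.mem_erase, Finset.mem_filter, Finset.mem_filter]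
    simp only [Finset.mem_univ, true_and]
    by_cases hnee : (x, y) = e
    · constructor
      · rintro ⟨hlt, hiff⟩
        exfalso
        rcases hecases with ⟨he', -⟩ | ⟨he', -⟩
        · rw [he'] at hnee
          obtain ⟨rfl, rfl⟩ := Prod.ext_iff.mp hnee
          rw [e1, e2] at hiff
          exact absurd (hiff.mpr h2) (asymm hπab)
        · rw [he'] at hnee
          obtain ⟨rfl, rfl⟩ := Prod.ext_iff.mp hnee
          rw [e2, e1] at hiff
          exact absurd (hiff.mp hπab) (asymm h2)
      · rintro ⟨hne', -⟩
        exact absurd hnee hne'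
    · have hstep : x < y → (σ x < σ y ↔ π x < π y) := by
        intro hlt
        by_cases hxa : x = a
        · subst hxa
          by_cases hyb : y = b
          · subst hyb
            exfalso
            rcases hecases with ⟨he', -⟩ | ⟨he', hba⟩
            · exact hnee he'.symm
            · exact absurd hlt (asymm hba)
          · have hya : y ≠ x := fun hh => absurd (hh ▸ hlt) (lt_irrefl _)
            rw [e1, e3 y hya hyb, Fin.lt_def, Fin.lt_def]
            have hv1 : (π y).val ≠ (π x).val := fun hh => hya (π.injective (Fin.ext hh))
            have hv2 : (π y).val ≠ (π b).val := fun hh => hyb (π.injective (Fin.ext hh))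
            omega
        · by_cases hxb : x = b
          · subst hxb
            by_cases hya : y = a
            · subst hya
              exfalso
              rcases hecases with ⟨he', hab'⟩ | ⟨he', -⟩
              · exact absurd hlt (asymm hab')
              · exact hnee he'.symm
            · have hyb : y ≠ x := fun hh => absurd (hh ▸ hlt) (lt_irrefl _)
              rw [e2, e3 y hya hyb, Fin.lt_def, Fin.lt_def]
              have hv1 : (π y).val ≠ (π a).val := fun hh => hya (π.injective (Fin.ext hh))
              have hv2 : (π y).val ≠ (π x).val := fun hh => hyb (π.injective (Fin.ext hh))
              omega
          · by_cases hya : y = a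
            · subst hya
              rw [e3 x hxa hxb, e1, Fin.lt_def, Fin.lt_def]
              have hv1 : (π x).val ≠ (π y).val := fun hh => hxa (π.injective (Fin.ext hh))
              have hv2 : (π x).val ≠ (π b).val := fun hh => hxb (π.injective (Fin.ext hh))
              omega
            · by_cases hyb : y = b
              · subst hyb
                rw [e3 x hxa hxb, e2, Fin.lt_def, Fin.lt_def]
                have hv1 : (π x).val ≠ (π a).val := fun hh => hxa (π.injective (Fin.ext hh))
                have hv2 : (π x).val ≠ (π y).val := fun hh => hxb (π.injective (Fin.ext hh))
                omega
              · rw [e3 x hxa hxb, e3 y hya hyb]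
      constructor
      · rintro ⟨hlt, hiff⟩
        exact ⟨hnee, hlt, by rw [← hstep hlt]; exact hiff⟩
      · rintro ⟨-, hlt, hiff⟩
        exact ⟨hlt, by rw [hstep hlt]; exact hiff⟩
  have hpos : 0 < invc ρ π := Finset.card_pos.mpr ⟨e, hmem⟩
  unfold invc
  rw [hset, Finset.card_erase_of_mem hmem]
  unfold invc at hpos
  omega

lemma invc_pos (ρ π : Equiv.Perm (Fin n)) (h : π ≠ ρ) : 0 < invc ρ π := by
  classical
  obtain ⟨a, b, h1, h2, e1, e2, e3⟩ := nextP_spec ρ π h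
  have hπab : π a < π b := Fin.lt_def.mpr (by omega)
  have hab : a ≠ b := fun e => by rw [e] at h1; omega
  apply Finset.card_pos.mpr
  by_cases h' : a < b
  · exact ⟨(a, b), by rw [Finset.mem_filter]; exact ⟨Finset.mem_univ _, h', iff_of_true hπab h2⟩⟩
  · refine ⟨(b, a), by rw [Finset.mem_filter]; exact ⟨Finset.mem_univ _,
      lt_of_le_of_ne (not_lt.mp h') (Ne.symm hab), iff_of_false (asymm hπab) (asymm h2)⟩⟩

/-- partial swap count up to time `t` -/
def S (T : ℕ → Equiv.Perm (Fin n)) (t : ℕ) (i j : Fin n) : ℕ :=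
  ((Finset.range t).filter fun s => T s i = T (s+1) j ∧ T s j = T (s+1) i).card

lemma S_succ (T : ℕ → Equiv.Perm (Fin n)) (t : ℕ) (i j : Fin n) :
    S T (t+1) i j = S T t i j +
      (if T t i = T (t+1) j ∧ T t j = T (t+1) i then 1 else 0) := by
  classical
  unfold S
  rw [Finset.range_add_one, Finset.filter_insert]
  split
  · rw [Finset.card_insert_of_notMem (by simp)]
  · simp

lemma adj_mono {π σ : Equiv.Perm (Fin n)} (h : Adjacent π σ) {i j : Fin n}
    (hns : ¬(π i = σ j ∧ π j = σ i)) (hlt : π i < π j) : σ i < σ j := by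
  have h1 := h i
  have h2 := h j
  have hij : i ≠ j := by rintro rfl; exact lt_irrefl _ hlt
  have hne : (σ i).val ≠ (σ j).val := by
    intro e
    exact hij (σ.injective (Fin.ext e))
  have hlt' : (π i).val < (π j).val := hlt
  by_contra hc
  have hc' : (σ j).val < (σ i).val := by
    rcases Nat.lt_or_ge (σ j).val (σ i).val with h' | h'
    · exact h'
    · exact absurd (Fin.lt_def.mpr (by omega)) hc
  apply hns
  constructor
  · exact Fin.ext (by omega)
  · exact Fin.ext (by omega)

lemma step_no_swap {π σ : Equiv.Perm (Fin n)} (h : Adjacent π σ) {i j : Fin n}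
    (hij : i ≠ j) (hns : ¬(π i = σ j ∧ π j = σ i)) : σ i < σ j ↔ π i < π j := by
  constructor
  · intro hs
    rcases lt_or_gt_of_ne (fun e : π i = π j => hij (π.injective e)) with h' | h'
    · exact h'
    · have := adj_mono h (fun e => hns ⟨e.2, e.1⟩) h'
      exact absurd hs (asymm this)
  · exact adj_mono h hns

lemma order_parity (T : ℕ → Equiv.Perm (Fin n)) {i j : Fin n} (hij : i ≠ j) :
    ∀ t, (∀ s, s < t → Adjacent (T s) (T (s+1))) →
      (T t i < T t j ↔ ((T 0 i < T 0 j) ↔ Even (S T t i j))) := by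
  intro t
  induction t with
  | zero => intro _; simp [S]
  | succ t ih =>
    intro hadj
    have key := ih (fun s hs => hadj s (by omega))
    have hadjt := hadj t (by omega)
    have hne : ∀ s : ℕ, T s i ≠ T s j := fun s e => hij ((T s).injective e)
    have htri : ∀ s : ℕ, ¬ (T s i < T s j) ↔ T s j < T s i := by
      intro s
      constructor
      · intro hs; rcases lt_or_gt_of_ne (hne s) with h' | h' <;> tauto
      · intro hs; exact asymm hs
    rw [S_succ]
    by_cases hsw : T t i = T (t+1) j ∧ T t j = T (t+1) i
    · rw [if_pos hsw]
      have e1 : T (t+1) i = T t j := hsw.2.symm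
      have e2 : T (t+1) j = T t i := hsw.1.symm
      rw [e1, e2, Nat.even_add_one]
      have h1 := htri t
      have h2 := htri 0
      tauto
    · rw [if_neg hsw]
      simp only [Nat.add_zero]
      rw [step_no_swap hadjt hij hsw]
      exact key


lemma fin_not_lt {u v : Fin n} (h : u ≠ v) : ¬(u < v) ↔ v < u := by
  constructor
  · intro h'; exact lt_of_le_of_ne (not_lt.mp h') (Ne.symm h)
  · intro h'; exact asymm h'

lemma swap_char (ρ π : Equiv.Perm (Fin n)) (h : π ≠ ρ) {i j : Fin n} (hij : i ≠ j)
    (hsw : π i = nextP ρ π j ∧ π j = nextP ρ π i) : (π i < π j ↔ ρ j < ρ i) := by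
  obtain ⟨a, b, h1, h2, e1, e2, e3⟩ := nextP_spec ρ π h
  have hπab : π a < π b := Fin.lt_def.mpr (by omega)
  have hi : i = a ∨ i = b := by
    by_contra hc
    push_neg at hc
    rw [e3 i hc.1 hc.2] at hsw
    exact hij (π.injective hsw.2).symm
  have hj : j = a ∨ j = b := by
    by_contra hc
    push_neg at hc
    rw [e3 j hc.1 hc.2] at hsw
    exact hij (π.injective hsw.1)
  rcases hi with rfl | rfl <;> rcases hj with rfl | rfl
  · exact absurd rfl hij
  · exact iff_of_true hπab h2
  · exact iff_of_false (asymm hπab) (asymm h2)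
  · exact absurd rfl hij

noncomputable def seqT (ρ : Equiv.Perm (Fin n)) : ℕ → Equiv.Perm (Fin n) :=
  fun t => (nextP ρ)^[t] 1

lemma seqT_zero (ρ : Equiv.Perm (Fin n)) : seqT ρ 0 = 1 := rfl

lemma seqT_succ (ρ : Equiv.Perm (Fin n)) (t : ℕ) :
    seqT ρ (t+1) = nextP ρ (seqT ρ t) := Function.iterate_succ_apply' _ _ _

lemma seqT_adj (ρ : Equiv.Perm (Fin n)) (t : ℕ) :
    Adjacent (seqT ρ t) (seqT ρ (t+1)) := by
  rw [seqT_succ]; exact nextP_adj _ _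

lemma seqT_reach (ρ : Equiv.Perm (Fin n)) :
    ∀ t, seqT ρ t = ρ ∨ invc ρ (seqT ρ t) + t ≤ invc ρ 1 := by
  intro t
  induction t with
  | zero => right; rw [seqT_zero]; omega
  | succ t ih =>
    by_cases hr : seqT ρ t = ρ
    · left; rw [seqT_succ, hr, nextP_fix]
    · rcases ih with h' | h'
      · exact absurd h' hr
      · right
        have := invc_facts ρ (seqT ρ t) hr
        rw [seqT_succ]
        omega

lemma seqT_final (ρ : Equiv.Perm (Fin n)) : seqT ρ (invc ρ 1) = ρ := by
  rcases seqT_reach ρ (invc ρ 1) with h | h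
  · exact h
  · by_contra hc
    have := invc_pos ρ _ hc
    omega

lemma seqT_count (ρ : Equiv.Perm (Fin n)) {i j : Fin n} (hij : i ≠ j) :
    ∀ t, S (seqT ρ) t i j ≤ 1 ∧
      (S (seqT ρ) t i j = 1 → (seqT ρ t i < seqT ρ t j ↔ ρ i < ρ j)) := by
  have hρij : ρ i ≠ ρ j := fun e => hij (ρ.injective e)
  intro t
  induction t with
  | zero =>
    constructor
    · simp [S]
    · intro h; simp [S] at h
  | succ t ih =>
    rw [S_succ]
    by_cases hsw : seqT ρ t i = seqT ρ (t+1) j ∧ seqT ρ t j = seqT ρ (t+1) i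
    · rw [if_pos hsw]
      have hne : seqT ρ t ≠ ρ := by
        intro e
        have heq : seqT ρ (t+1) = seqT ρ t := by
          rw [seqT_succ, e, nextP_fix, ← e]
        rw [heq] at hsw
        exact hij ((seqT ρ t).injective hsw.1)
      have hsw' := hsw
      rw [seqT_succ] at hsw'
      have hchar := swap_char ρ (seqT ρ t) hne hij hsw'
      have hS0 : S (seqT ρ) t i j = 0 := by
        have h1 := ih.1
        by_contra h0
        have hS1 : S (seqT ρ) t i j = 1 := by omega
        have hag := ih.2 hS1
        have hcomb : ρ i < ρ j ↔ ρ j < ρ i := hag.symm.trans hchar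
        rcases lt_or_gt_of_ne hρij with h' | h'
        · exact absurd (hcomb.mp h') (asymm h')
        · exact absurd (hcomb.mpr h') (asymm h')
      rw [hS0]
      refine ⟨le_refl _, fun _ => ?_⟩
      have e1 : seqT ρ (t+1) i = seqT ρ t j := hsw.2.symm
      have e2 : seqT ρ (t+1) j = seqT ρ t i := hsw.1.symm
      rw [e1, e2]
      have htne : seqT ρ t i ≠ seqT ρ t j := fun e => hij ((seqT ρ t).injective e)
      have h3 := fin_not_lt htne
      have h5 := fin_not_lt (Ne.symm hρij)
      constructor
      · intro hh
        exact h5.mp (fun hr => (h3.mpr hh) (hchar.mpr hr))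
      · intro hh
        exact h3.mp (fun ht => asymm hh (hchar.mp ht))
    · rw [if_neg hsw]
      simp only [Nat.add_zero]
      rw [step_no_swap (seqT_adj ρ t) hij hsw]
      exact ih


lemma val_eq_card (ρ : Equiv.Perm (Fin n)) (i : Fin n) :
    ((ρ i : ℕ)) = (univ.filter fun j => ρ j < ρ i).card := by
  classical
  have h1 : (univ.filter fun j : Fin n => ρ j < ρ i).card
      = (univ.filter fun k : Fin n => k < ρ i).card := by
    apply Finset.card_bij (fun j _ => ρ j)
    · intro a ha; simp at ha ⊢; exact ha
    · intro a ha b hb e; exact ρ.injective e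
    · intro k hk; refine ⟨ρ.symm k, ?_, by simp⟩
      simp at hk ⊢; simpa using hk
  rw [h1]
  have : (univ.filter fun k : Fin n => k < ρ i) = Finset.Iio (ρ i) := by
    ext k; simp
  rw [this, Fin.card_Iio]

lemma card_split (p : Fin n → Prop) [DecidablePred p] (i : Fin n) (hpi : ¬ p i) :
    (univ.filter p).card = (univ.filter fun j => j < i ∧ p j).card
      + (univ.filter fun j => i < j ∧ p j).card := by
  classical
  rw [← Finset.card_union_of_disjoint]
  · congr 1
    rw [← Finset.filter_or]
    apply Finset.filter_congr
    intro j _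
    constructor
    · intro hp
      have hji : j ≠ i := fun e => hpi (e ▸ hp)
      rcases lt_or_gt_of_ne hji with h' | h' <;> tauto
    · tauto
  · rw [Finset.disjoint_filter]
    intro j _ hj1 hj2
    exact absurd (hj1.1.trans hj2.1) (lt_irrefl _)

lemma perm_displacement (ρ : Equiv.Perm (Fin n)) (i : Fin n) :
    ((ρ i : ℤ)) = (i : ℤ) + ((univ.filter fun j => i < j ∧ ρ j < ρ i).card : ℤ)
      - ((univ.filter fun j => j < i ∧ ρ i < ρ j).card : ℤ) := by
  classical
  have h1 : ((ρ i : ℕ)) = (univ.filter fun j => j < i ∧ ρ j < ρ i).card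
      + (univ.filter fun j => i < j ∧ ρ j < ρ i).card :=
    (val_eq_card ρ i).trans (card_split _ i (by simp))
  have h2 : ((i : ℕ)) = (univ.filter fun j => j < i ∧ j < i).card
      + (univ.filter fun j => i < j ∧ j < i).card := by
    have := (val_eq_card (1 : Equiv.Perm (Fin n)) i).trans
      (card_split (fun j => (1 : Equiv.Perm (Fin n)) j < (1 : Equiv.Perm (Fin n)) i) i (by simp))
    simp at this; rw [this]; congr 1 <;> congr 1 <;> ext <;> simp
  have h3 : (univ.filter fun j : Fin n => j < i ∧ j < i).card
      = (univ.filter fun j => j < i ∧ ρ j < ρ i).card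
        + (univ.filter fun j => j < i ∧ ρ i < ρ j).card := by
    rw [← Finset.card_union_of_disjoint]
    · congr 1
      rw [← Finset.filter_or]
      apply Finset.filter_congr
      intro j _
      constructor
      · intro hp
        have hji : ρ j ≠ ρ i := fun e => (lt_irrefl i) (ρ.injective e ▸ hp.1)
        rcases lt_or_gt_of_ne hji with h' | h' <;> tauto
      · rintro (h | h) <;> exact ⟨h.1, h.1⟩
    · rw [Finset.disjoint_filter]
      intro j _ hj1 hj2
      exact absurd (hj1.2.trans hj2.2) (lt_irrefl _)
  have h4 : (univ.filter fun j : Fin n => i < j ∧ j < i).card = 0 := by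
    rw [Finset.card_eq_zero]
    ext j
    simp only [Finset.mem_filter, Finset.mem_univ, true_and, Finset.notMem_empty, iff_false]
    rintro ⟨h1, h2⟩
    exact absurd (h1.trans h2) (lt_irrefl _)
  omega


lemma tournament_lemma {V : Type*} [DecidableEq V] (r : V → V → Prop) [DecidableRel r] :
    ∀ s : Finset V,
      (∀ i ∈ s, ¬ r i i) →
      (∀ i ∈ s, ∀ j ∈ s, i ≠ j → (r i j ↔ ¬ r j i)) →
      (∀ i ∈ s, ∀ j ∈ s,
        (s.filter fun x => r x i).card = (s.filter fun x => r x j).card → i = j) →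
      ∀ i ∈ s, ∀ j ∈ s,
        (s.filter fun x => r x j).card < (s.filter fun x => r x i).card → r j i := by
  intro s
  induction s using Finset.strongInduction with
  | _ s ih =>
    intro hirr htour hinj i hi j hj hlt
    set d : V → ℕ := fun i => (s.filter fun x => r x i).card with hd
    have hbound : ∀ x ∈ s, d x ≤ s.card - 1 := by
      intro x hx
      have hsub : (s.filter fun y => r y x) ⊆ s.erase x := by
        intro y hy
        rw [Finset.mem_filter] at hy
        rw [Finset.mem_erase]
        exact ⟨fun e => hirr x hx (e ▸ hy.2), hy.1⟩
      calc d x ≤ (s.erase x).card := Finset.card_le_card hsub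
        _ = s.card - 1 := Finset.card_erase_of_mem hx
    have hcardpos : 0 < s.card := Finset.card_pos.mpr ⟨i, hi⟩
    -- get max element m with d m = s.card - 1
    have himg : s.image d = Finset.range s.card := by
      apply Finset.eq_of_subset_of_card_le
      · intro v hv
        rw [Finset.mem_image] at hv
        obtain ⟨x, hx, rfl⟩ := hv
        rw [Finset.mem_range]
        have := hbound x hx; omega
      · rw [Finset.card_range, Finset.card_image_of_injOn]
        intro x hx y hy e
        exact hinj x hx y hy e
    have hm : ∃ m ∈ s, d m = s.card - 1 := by
      have : s.card - 1 ∈ s.image d := by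
        rw [himg, Finset.mem_range]; omega
      rw [Finset.mem_image] at this
      obtain ⟨m, hms, hdm⟩ := this
      exact ⟨m, hms, hdm⟩
    obtain ⟨m, hms, hdm⟩ := hm
    have hbeat : ∀ x ∈ s, x ≠ m → r x m := by
      intro x hx hxm
      have hsub : (s.filter fun y => r y m) ⊆ s.erase m := by
        intro y hy
        rw [Finset.mem_filter] at hy
        rw [Finset.mem_erase]
        exact ⟨fun e => hirr m hms (e ▸ hy.2), hy.1⟩
      have heq : (s.filter fun y => r y m) = s.erase m := by
        apply Finset.eq_of_subset_of_card_le hsub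
        rw [Finset.card_erase_of_mem hms]
        exact le_of_eq hdm.symm
      have : x ∈ s.erase m := Finset.mem_erase.mpr ⟨hxm, hx⟩
      rw [← heq, Finset.mem_filter] at this
      exact this.2
    by_cases him : i = m
    · subst him
      have hji : j ≠ i := by rintro rfl; exact absurd hlt (lt_irrefl _)
      exact hbeat j hj hji
    · by_cases hjm : j = m
      · subst hjm
        have h1 : d i ≤ s.card - 1 := hbound i hi
        have h2 : d j < d i := hlt
        omega
      · -- both in s.erase m, use induction
        have hssub : s.erase m ⊂ s := Finset.erase_ssubset hms
        have hdeq : ∀ x ∈ s.erase m, ((s.erase m).filter fun y => r y x).card = d x := by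
          intro x hx
          rw [Finset.mem_erase] at hx
          congr 1
          rw [Finset.filter_erase]
          apply Finset.erase_eq_of_notMem
          rw [Finset.mem_filter]
          rintro ⟨-, hrm⟩
          have := (htour x hx.2 m hms hx.1).mp (hbeat x hx.2 hx.1)
          exact this hrm
        have hie : i ∈ s.erase m := Finset.mem_erase.mpr ⟨him, hi⟩
        have hje : j ∈ s.erase m := Finset.mem_erase.mpr ⟨hjm, hj⟩
        apply ih (s.erase m) hssub
          (fun x hx => hirr x (Finset.mem_of_mem_erase hx))
          (fun x hx y hy => htour x (Finset.mem_of_mem_erase hx) y (Finset.mem_of_mem_erase hy))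
          (fun x hx y hy e => hinj x (Finset.mem_of_mem_erase hx) y (Finset.mem_of_mem_erase hy)
            (by rw [hdeq x hx, hdeq y hy] at e; exact e))
          i hie j hje
        rw [hdeq i hie, hdeq j hje]
        exact hlt


def rel (l : Fin n → Fin n → ℕ) (x y : Fin n) : Prop :=
  (x < y ∧ l y x = 0) ∨ (y < x ∧ l y x = 1)

instance (l : Fin n → Fin n → ℕ) : DecidableRel (rel l) := fun x y => by
  unfold rel; infer_instance

lemma rel_char {l : Fin n → Fin n → ℕ} (hsym : ∀ i j, l i j = l j i) {x y : Fin n}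
    (h' : x < y) : (rel l x y ↔ l x y = 0) ∧ (rel l y x ↔ l x y = 1) := by
  have h'' : ¬ y < x := asymm h'
  have hs := hsym x y
  constructor
  · constructor
    · rintro (⟨-, hl⟩ | ⟨hc, -⟩)
      · omega
      · exact absurd hc h''
    · intro hl; exact Or.inl ⟨h', by omega⟩
  · constructor
    · rintro (⟨hc, -⟩ | ⟨-, hl⟩)
      · exact absurd hc h''
      · exact hl
    · intro hl; exact Or.inr ⟨h', hl⟩

end ST

/-- A simple list is feasible iff it is consistent. -/
theorem simple_feasible_iff_consistent (n : ℕ) (l : Fin n → Fin n → ℕ)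
    (hsym : ∀ i j, l i j = l j i) (hdiag : ∀ i, l i i = 0)
    (hsimple : ∀ i j, l i j ≤ 1) :
    Feasible l ↔ Consistent l := by
  classical
  constructor
  · rintro ⟨h, T, ⟨⟨h1, hadj⟩, hT0, hcnt⟩⟩
    refine ⟨T (h-1), fun i => ?_⟩
    have hadj' : ∀ s, s < h - 1 → Adjacent (T s) (T (s+1)) := fun s hs => hadj s (by omega)
    have flip : ∀ p q : Fin n, p < q → (Odd (l p q) ↔ T (h-1) q < T (h-1) p) := by
      intro p q hpq
      have hne : p ≠ q := ne_of_lt hpq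
      have hp := ST.order_parity T hne (h-1) hadj'
      have hT0pq : T 0 p < T 0 q := by rw [hT0]; exact hpq
      have hS : ST.S T (h-1) p q = l p q := hcnt p q hne
      constructor
      · intro ho
        have hnev : ¬ Even (ST.S T (h-1) p q) := by
          rw [hS]; exact Nat.not_even_iff_odd.mpr ho
        have hnlt : ¬ (T (h-1) p < T (h-1) q) := fun hl => hnev ((hp.mp hl).mp hT0pq)
        exact (ST.fin_not_lt (fun e => hne ((T (h-1)).injective e))).mp hnlt
      · intro hl
        rw [← Nat.not_even_iff_odd, ← hS]
        intro hev
        exact asymm hl (hp.mpr (iff_of_true hT0pq hev))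
    have hd := ST.perm_displacement (T (h-1)) i
    have e1 : (univ.filter fun j => i < j ∧ Odd (l i j))
        = (univ.filter fun j => i < j ∧ T (h-1) j < T (h-1) i) := by
      apply Finset.filter_congr
      intro j _
      constructor
      · rintro ⟨hlt, ho⟩; exact ⟨hlt, (flip i j hlt).mp ho⟩
      · rintro ⟨hlt, ho⟩; exact ⟨hlt, (flip i j hlt).mpr ho⟩
    have e2 : (univ.filter fun j => j < i ∧ Odd (l i j))
        = (univ.filter fun j => j < i ∧ T (h-1) i < T (h-1) j) := by
      apply Finset.filter_congr
      intro j _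
      constructor
      · rintro ⟨hlt, ho⟩
        exact ⟨hlt, (flip j i hlt).mp (by rw [hsym j i]; exact ho)⟩
      · rintro ⟨hlt, ho⟩
        exact ⟨hlt, by rw [hsym i j]; exact (flip j i hlt).mpr ho⟩
    rw [e1, e2]
    omega
  · rintro ⟨ρ, hρ⟩
    have hodd : ∀ p q : Fin n, (Odd (l p q) ↔ l p q = 1) := fun p q => by
      have := hsimple p q; rw [Nat.odd_iff]; omega
    have hd : ∀ i : Fin n, ((univ.filter fun x => ST.rel l x i).card) = ((ρ i : ℕ)) := by
      intro i
      have hsp := hρ i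
      have hdisj : Disjoint (univ.filter fun x => x < i ∧ l i x = 0)
          (univ.filter fun x => i < x ∧ l i x = 1) := by
        rw [Finset.disjoint_filter]
        intro x _ hx1 hx2
        exact absurd (hx1.1.trans hx2.1) (lt_irrefl _)
      have hc12 : (univ.filter fun x => ST.rel l x i).card
          = (univ.filter fun x => x < i ∧ l i x = 0).card
            + (univ.filter fun x => i < x ∧ l i x = 1).card := by
        rw [← Finset.card_union_of_disjoint hdisj]
        congr 1
        rw [← Finset.filter_or]
        apply Finset.filter_congr
        intro x _
        exact Iff.rfl
      have hA : (univ.filter fun j => i < j ∧ Odd (l i j))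
          = (univ.filter fun x => i < x ∧ l i x = 1) := by
        apply Finset.filter_congr
        intro x _
        rw [hodd i x]
      have hB : (univ.filter fun j => j < i ∧ Odd (l i j))
          = (univ.filter fun x => x < i ∧ l i x = 1) := by
        apply Finset.filter_congr
        intro x _
        rw [hodd i x]
      have hival : ((i : ℕ)) = (univ.filter fun x : Fin n => x < i).card := by
        have := ST.val_eq_card (1 : Equiv.Perm (Fin n)) i
        simp at this; rw [this]; congr 1
      have hdisj2 : Disjoint (univ.filter fun x => x < i ∧ l i x = 0)
          (univ.filter fun x => x < i ∧ l i x = 1) := by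
        rw [Finset.disjoint_filter]
        intro x _ hx1 hx2
        omega
      have hisplit : (univ.filter fun x : Fin n => x < i).card
          = (univ.filter fun x => x < i ∧ l i x = 0).card
            + (univ.filter fun x => x < i ∧ l i x = 1).card := by
        rw [← Finset.card_union_of_disjoint hdisj2]
        congr 1
        rw [← Finset.filter_or]
        apply Finset.filter_congr
        intro x _
        constructor
        · intro hx
          by_cases hl : l i x = 1
          · exact Or.inr ⟨hx, hl⟩
          · exact Or.inl ⟨hx, by have := hsimple i x; omega⟩
        · rintro (⟨hx, -⟩ | ⟨hx, -⟩) <;> exact hx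
      rw [hA, hB] at hsp
      have hiz : ((i : ℤ)) = ((i : ℕ) : ℤ) := rfl
      have hρz : ((ρ i : ℤ)) = ((ρ i : ℕ) : ℤ) := rfl
      rw [hiz, hρz] at hsp
      omega
    have hirr : ∀ x ∈ (univ : Finset (Fin n)), ¬ ST.rel l x x := by
      intro x _
      rintro (⟨hc, -⟩ | ⟨hc, -⟩) <;> exact absurd hc (lt_irrefl _)
    have htour : ∀ x ∈ (univ : Finset (Fin n)), ∀ y ∈ (univ : Finset (Fin n)),
        x ≠ y → (ST.rel l x y ↔ ¬ ST.rel l y x) := by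
      intro x _ y _ hxy
      rcases lt_or_gt_of_ne hxy with h' | h'
      · obtain ⟨hc1, hc2⟩ := ST.rel_char hsym h'
        have := hsimple x y
        rw [hc1, hc2]; omega
      · obtain ⟨hc1, hc2⟩ := ST.rel_char hsym h'
        have := hsimple y x
        rw [hc1, hc2]; omega
    have hinj : ∀ x ∈ (univ : Finset (Fin n)), ∀ y ∈ (univ : Finset (Fin n)),
        ((univ.filter fun a => ST.rel l a x).card = (univ.filter fun a => ST.rel l a y).card)
          → x = y := by
      intro x _ y _ he
      rw [hd x, hd y] at he
      exact ρ.injective (Fin.ext he)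
    have hT := ST.tournament_lemma (ST.rel l) univ hirr htour hinj
    have hfin : ∀ i j : Fin n, i < j → (l i j = 1 ↔ ρ j < ρ i) := by
      intro i j hij
      have hρne : ρ i ≠ ρ j := fun e => absurd (ρ.injective e) (ne_of_lt hij)
      obtain ⟨hc1, hc2⟩ := ST.rel_char hsym hij
      constructor
      · intro hl
        rcases lt_or_gt_of_ne hρne with h' | h'
        · exfalso
          have hdlt : (univ.filter fun a => ST.rel l a i).card
              < (univ.filter fun a => ST.rel l a j).card := by
            rw [hd i, hd j]; exact h'
          have hrij := hT j (Finset.mem_univ _) i (Finset.mem_univ _) hdlt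
          exact (htour i (Finset.mem_univ _) j (Finset.mem_univ _) (ne_of_lt hij)).mp hrij
            (hc2.mpr hl)
        · exact h'
      · intro h'
        have hdlt : (univ.filter fun a => ST.rel l a j).card
            < (univ.filter fun a => ST.rel l a i).card := by
          rw [hd i, hd j]; exact h'
        exact hc2.mp (hT i (Finset.mem_univ _) j (Finset.mem_univ _) hdlt)
    refine ⟨ST.invc ρ 1 + 1, ST.seqT ρ, ⟨⟨by omega, fun t _ => ST.seqT_adj ρ t⟩, rfl, ?_⟩⟩
    have key : ∀ p q : Fin n, p < q → ST.S (ST.seqT ρ) (ST.invc ρ 1) p q = l p q := by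
      intro p q hpq
      have hne : p ≠ q := ne_of_lt hpq
      have hpar := ST.order_parity (ST.seqT ρ) hne (ST.invc ρ 1) (fun s _ => ST.seqT_adj ρ s)
      have h0 : ST.seqT ρ 0 p < ST.seqT ρ 0 q := by rw [ST.seqT_zero]; exact hpq
      rw [ST.seqT_final] at hpar
      have hbd := ST.seqT_count ρ hne (ST.invc ρ 1)
      have hρne : ρ p ≠ ρ q := fun e => hne (ρ.injective e)
      have hS1 := hbd.1
      have hlpq := hsimple p q
      rcases lt_or_gt_of_ne hρne with h' | h'
      · have hev : Even (ST.S (ST.seqT ρ) (ST.invc ρ 1) p q) := (hpar.mp h').mp h0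
        have hl0 : l p q ≠ 1 := fun hl => absurd ((hfin p q hpq).mp hl) (asymm h')
        rw [Nat.even_iff] at hev
        omega
      · have hnev : ¬ Even (ST.S (ST.seqT ρ) (ST.invc ρ 1) p q) := by
          intro hev
          exact asymm h' (hpar.mpr (iff_of_true h0 hev))
        have hl1 : l p q = 1 := (hfin p q hpq).mpr h'
        rw [Nat.not_even_iff] at hnev
        omega
    intro i j hij
    rcases lt_or_gt_of_ne hij with h' | h'
    · exact key i j h'
    · have hs : SwapCount (ST.seqT ρ) (ST.invc ρ 1 + 1) i j
          = SwapCount (ST.seqT ρ) (ST.invc ρ 1 + 1) j i := by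
        unfold SwapCount
        congr 1
        apply Finset.filter_congr
        intro t _
        exact and_comm
      rw [hs, hsym i j]
      exact key j i h'
end

section
/- For each n ≥ 2 and each pair of permutations π, σ of [n], there exists a tangle T of height at most n + 1 that starts with π, ends with σ, and such that each pair of wires swaps at most once in T (i.e., the list L(T) is simple). -/
open Finset

namespace OES

section StepRun

variable {α : Type*} [LinearOrder α] {β : Type*} [LinearOrder β]

/-- One round of odd–even transposition: positions `p, p+1` with `p ≡ t (mod 2)` are compared. -/
def step (t : ℕ) (a : ℕ → α) : ℕ → α := fun p =>
  if p % 2 = t % 2 then min (a p) (a (p + 1)) else max (a (p - 1)) (a p)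

/-- Running `t` rounds of odd–even transposition sort. -/
def run (a : ℕ → α) : ℕ → ℕ → α
  | 0 => a
  | t + 1 => step t (run a t)

lemma run_succ (a : ℕ → α) (t : ℕ) : run a (t + 1) = step t (run a t) := rfl

lemma step_comp {f : α → β} (hf : Monotone f) (t : ℕ) (a : ℕ → α) :
    step t (f ∘ a) = f ∘ step t a := by
  funext p
  by_cases h : p % 2 = t % 2<;>
    simp [step, h, Function.comp, hf.map_min, hf.map_max]

lemma run_comp {f : α → β} (hf : Monotone f) (a : ℕ → α) (t : ℕ) :
    run (f ∘ a) t = f ∘ run a t := by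
  induction t with
  | zero => rfl
  | succ t ih => rw [run_succ, run_succ, ih, step_comp hf]

/-- Each value moves by at most one position in a round. -/
lemma move (t : ℕ) (a : ℕ → α) (p : ℕ) :
    ∃ p', (p' = p ∨ p' = p + 1 ∨ p' + 1 = p) ∧ step t a p' = a p := by
  by_cases hp : p % 2 = t % 2
  · rcases le_total (a p) (a (p + 1)) with h | h
    · exact ⟨p, Or.inl rfl, by rw [step, if_pos hp, min_eq_left h]⟩
    · refine ⟨p + 1, Or.inr (Or.inl rfl), ?_⟩
      rw [step, if_neg (by omega)]
      simpa using max_eq_left h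
  · rcases Nat.eq_zero_or_eq_succ_pred p with hp0 | hps
    · subst hp0
      refine ⟨0, Or.inl rfl, ?_⟩
      rw [step, if_neg hp]
      show max (a (0 - 1)) (a 0) = a 0
      norm_num
    · obtain ⟨q, rfl⟩ : ∃ q, p = q + 1 := ⟨p - 1, hps⟩
      have hq : q % 2 = t % 2 := by omega
      rcases le_total (a q) (a (q + 1)) with h | h
      · refine ⟨q + 1, Or.inl rfl, ?_⟩
        rw [step, if_neg hp]
        simpa using max_eq_right h
      · exact ⟨q, Or.inr (Or.inr rfl), by rw [step, if_pos hq, min_eq_right h]⟩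

lemma step_inj {a : ℕ → α} (ha : Function.Injective a) (t : ℕ) :
    Function.Injective (step t a) := by
  have key : ∀ p, ∃ u, step t a p = a u ∧
      ((p % 2 = t % 2 ∧ (u = p ∨ u = p + 1)) ∨ (¬ p % 2 = t % 2 ∧ (u = p ∨ u + 1 = p))) := by
    intro p
    by_cases hp : p % 2 = t % 2
    · rcases le_total (a p) (a (p + 1)) with h | h
      · exact ⟨p, by rw [step, if_pos hp, min_eq_left h], Or.inl ⟨hp, Or.inl rfl⟩⟩
      · exact ⟨p + 1, by rw [step, if_pos hp, min_eq_right h], Or.inl ⟨hp, Or.inr rfl⟩⟩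
    · rcases Nat.eq_zero_or_eq_succ_pred p with hp0 | hps
      · subst hp0
        refine ⟨0, ?_, Or.inr ⟨hp, Or.inl rfl⟩⟩
        rw [step, if_neg hp]
        show max (a (0 - 1)) (a 0) = a 0
        norm_num
      · obtain ⟨q, rfl⟩ : ∃ q, p = q + 1 := ⟨p - 1, hps⟩
        rcases le_total (a q) (a (q + 1)) with h | h
        · refine ⟨q + 1, ?_, Or.inr ⟨hp, Or.inl rfl⟩⟩
          rw [step, if_neg hp]
          simpa using max_eq_right h
        · refine ⟨q, ?_, Or.inr ⟨hp, Or.inr rfl⟩⟩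
          rw [step, if_neg hp]
          simpa using max_eq_left h
  have aux : ∀ p q, p < q → step t a p = step t a q → False := by
    intro p q hpq h
    by_cases hsp : q = p + 1 ∧ p % 2 = t % 2
    · obtain ⟨rfl, hp⟩ := hsp
      have h1 : step t a p = min (a p) (a (p + 1)) := by rw [step, if_pos hp]
      have h2 : step t a (p + 1) = max (a p) (a (p + 1)) := by
        rw [step, if_neg (by omega)]
        simp
      rw [h1, h2] at h
      have he : a p = a (p + 1) := by
        have l1 : a p ≤ a (p + 1) :=
          (le_max_left (a p) (a (p + 1))).trans (h ▸ min_le_right (a p) (a (p + 1)))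
        have l2 : a (p + 1) ≤ a p :=
          (le_max_right (a p) (a (p + 1))).trans (h ▸ min_le_left (a p) (a (p + 1)))
        exact le_antisymm l1 l2
      have := ha he
      omega
    · obtain ⟨u, hu, hcu⟩ := key p
      obtain ⟨v, hv, hcv⟩ := key q
      have huv : u = v := ha (by rw [← hu, ← hv, h])
      omega
  intro p q h
  rcases lt_trichotomy p q with hlt | heq | hgt
  · exact absurd (aux p q hlt h) (by simp)
  · exact heq
  · exact absurd (aux q p hgt h.symm) (by simp)

/-- Comparators never disorder a correctly-ordered pair. -/
lemma persist {t : ℕ} {a : ℕ → α} (ha : Function.Injective a) {x y x' y' : ℕ}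
    (hxy : x < y) (hv : a x < a y)
    (hx' : step t a x' = a x) (hy' : step t a y' = a y) : x' < y' := by
  have hinj := step_inj ha t
  obtain ⟨px, hpxr, hpxe⟩ := move t a x
  obtain ⟨py, hpyr, hpye⟩ := move t a y
  have hxpx : x' = px := hinj (hx'.trans hpxe.symm)
  have hypy : y' = py := hinj (hy'.trans hpye.symm)
  subst hxpx; subst hypy
  have hne : x' ≠ y' := by
    intro he
    rw [he, hy'] at hx'
    exact absurd hx'.symm (ne_of_lt hv)
  rcases (by omega : y = x + 1 ∨ x + 2 ≤ y) with rfl | hfar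
  · by_cases hp : x % 2 = t % 2
    · have e1 : step t a x = a x := by rw [step, if_pos hp, min_eq_left hv.le]
      have e2 : step t a (x + 1) = a (x + 1) := by
        rw [step, if_neg (by omega)]
        simpa using max_eq_right hv.le
      have hx : x' = x := hinj (hx'.trans e1.symm)
      have hy : y' = x + 1 := hinj (hy'.trans e2.symm)
      omega
    · -- x' ≠ x + 1
      have hx1 : x' ≠ x + 1 := by
        intro he
        subst he
        rw [step, if_pos (by omega)] at hx'
        rcases min_cases (a (x + 1)) (a (x + 2)) with ⟨he2, _⟩ | ⟨he2, _⟩ <;>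
          · rw [he2] at hx'
            have := ha hx'
            omega
      -- y' ≠ x
      have hy1 : y' ≠ x := by
        intro he
        subst he
        rw [step, if_neg hp] at hy'
        rcases max_cases (a (y' - 1)) (a y') with ⟨he2, _⟩ | ⟨he2, _⟩ <;>
          · rw [he2] at hy'
            have := ha hy'
            omega
      omega
  · omega

end StepRun



section BoolSide

lemma bmin_false_iff : ∀ x y : Bool, min x y = false ↔ x = false ∨ y = false := by decide
lemma bmax_false_iff : ∀ x y : Bool, max x y = false ↔ x = false ∧ y = false := by decide
lemma bmin_false_left : ∀ x : Bool, min false x = false := by decide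
lemma bmin_false_right : ∀ x : Bool, min x false = false := by decide
lemma bmax_true_right : ∀ x : Bool, max x true = true := by decide
lemma bmax_false_false : max false false = false := by decide

variable {b : ℕ → Bool} {n : ℕ}

lemma step_pad (hb : ∀ q, n ≤ q → b q = true) (t : ℕ) :
    ∀ q, n ≤ q → step t b q = true := by
  intro q hq
  rw [step]
  split_ifs with h
  · rw [hb q hq, hb (q + 1) (by omega)]
    simp
  · rw [hb q hq, bmax_true_right]

lemma run_pad (hb : ∀ q, n ≤ q → b q = true) (t : ℕ) :
    ∀ q, n ≤ q → run b t q = true := by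
  induction t with
  | zero => exact hb
  | succ t ih => exact step_pad ih t

lemma zero_lt_n (hb : ∀ q, n ≤ q → b q = true) {t p : ℕ} (hp : run b t p = false) :
    p < n := by
  by_contra h
  rw [run_pad hb t p (by omega)] at hp
  exact absurd hp (by simp)

/-- Parity lemma: at time `s+1`, a zero whose left neighbour is a one
sits so that its move-comparator will be active at round `s+1`. -/
lemma L1 {B : ℕ → Bool} {s q : ℕ} (h1 : step s B (q + 1) = false)
    (h2 : step s B q = true) : q % 2 = (s + 1) % 2 := by
  by_cases hq : (q + 1) % 2 = s % 2
  · omega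
  · exfalso
    rw [step, if_neg hq] at h1
    simp only [Nat.add_sub_cancel] at h1
    obtain ⟨hq1, hq2⟩ := (bmax_false_iff _ _).1 h1
    rw [step, if_pos (by omega), hq1, bmin_false_left] at h2
    exact absurd h2 (by simp)

/-- the moving condition for a zero at `p` at round `t` -/
def mv (t : ℕ) (B : ℕ → Bool) (p : ℕ) : Prop :=
  1 ≤ p ∧ (p - 1) % 2 = t % 2 ∧ B (p - 1) = true

instance (t : ℕ) (B : ℕ → Bool) (p : ℕ) : Decidable (mv t B p) := by
  unfold mv; infer_instance

def phi (t : ℕ) (B : ℕ → Bool) (p : ℕ) : ℕ := if mv t B p then p - 1 else p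

lemma phi_le (t : ℕ) (B : ℕ → Bool) (p : ℕ) : phi t B p ≤ p := by
  rw [phi]; split_ifs <;> omega

lemma phi_zero {B : ℕ → Bool} {t p : ℕ} (hp : B p = false) :
    step t B (phi t B p) = false := by
  rw [phi]
  split_ifs with h
  · obtain ⟨h1, h2, h3⟩ := h
    rw [step, if_pos h2]
    have e : p - 1 + 1 = p := by omega
    rw [e, hp, bmin_false_right]
  · rw [step]
    split_ifs with h2
    · rw [hp, bmin_false_left]
    · rw [mv] at h
      push_neg at h
      rcases Nat.eq_zero_or_eq_succ_pred p with hp0 | hps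
      · subst hp0
        rw [show (0:ℕ) - 1 = 0 from rfl, hp, bmax_false_false]
      · have h1 : 1 ≤ p := by omega
        have h2' : (p - 1) % 2 = t % 2 := by omega
        have h3 := h h1 h2'
        simp only [Bool.not_eq_true] at h3
        rw [h3, hp, bmax_false_false]

lemma phi_surj {B : ℕ → Bool} {t p : ℕ} (h : step t B p = false) :
    ∃ q, B q = false ∧ phi t B q = p := by
  rw [step] at h
  split_ifs at h with hp
  · by_cases hBp : B p = false
    · refine ⟨p, hBp, ?_⟩
      rw [phi, if_neg ?_]
      rintro ⟨e1, e2, e3⟩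
      omega
    · have hBp' : B p = true := by
        revert hBp; cases B p <;> simp
      have h1 : B (p + 1) = false := by
        rcases (bmin_false_iff _ _).1 h with h1 | h1
        · rw [h1] at hBp'; exact absurd hBp' (by simp)
        · exact h1
      refine ⟨p + 1, h1, ?_⟩
      rw [phi, if_pos ?_]
      · omega
      · exact ⟨by omega, by simpa using hp, by simpa using hBp'⟩
  · obtain ⟨h1, h2⟩ := (bmax_false_iff _ _).1 h
    refine ⟨p, h2, ?_⟩
    rw [phi, if_neg ?_]
    rintro ⟨e1, e2, e3⟩
    rw [e3] at h1
    exact absurd h1 (by simp)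


/-- set of zeros at time `t` -/
def Zb (n : ℕ) (b : ℕ → Bool) (t : ℕ) : Finset ℕ :=
  (range n).filter fun p => run b t p = false

lemma mem_Zb (hb : ∀ q, n ≤ q → b q = true) {t p : ℕ} :
    p ∈ Zb n b t ↔ run b t p = false := by
  constructor
  · intro h
    exact (mem_filter.1 h).2
  · intro h
    exact mem_filter.2 ⟨mem_range.2 (zero_lt_n hb h), h⟩

lemma phi_smono {B : ℕ → Bool} {t p q : ℕ} (hp : B p = false) (hq : B q = false)
    (hpq : p < q) : phi t B p < phi t B q := by
  rw [phi, phi]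
  split_ifs with h1 h2 h2
  · have := h1.1
    omega
  · omega
  · have hne : q - 1 ≠ p := by
      intro he
      have h3 := h2.2.2
      rw [he, hp] at h3
      exact absurd h3 (by simp)
    have := h2.1
    omega
  · omega

lemma Zb_succ (hb : ∀ q, n ≤ q → b q = true) (t : ℕ) :
    Zb n b (t + 1) = (Zb n b t).image (phi t (run b t)) := by
  ext p
  constructor
  · intro hp
    have h0 : step t (run b t) p = false := (mem_Zb hb).1 hp
    obtain ⟨q, hq, hφ⟩ := phi_surj h0
    exact mem_image.2 ⟨q, (mem_Zb hb).2 hq, hφ⟩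
  · intro hp
    obtain ⟨q, hq, rfl⟩ := mem_image.1 hp
    exact (mem_Zb hb).2 (phi_zero ((mem_Zb hb).1 hq))

lemma card_Zb (hb : ∀ q, n ≤ q → b q = true) (t : ℕ) :
    (Zb n b t).card = (Zb n b 0).card := by
  induction t with
  | zero => rfl
  | succ t ih =>
    rw [Zb_succ hb t, Finset.card_image_of_injOn, ih]
    intro x hx y hy hxy
    have hx' := (mem_Zb hb).1 hx
    have hy' := (mem_Zb hb).1 hy
    rcases lt_trichotomy x y with h | h | h
    · exact absurd hxy (ne_of_lt (phi_smono hx' hy' h))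
    · exact h
    · exact absurd hxy.symm (ne_of_lt (phi_smono hy' hx' h))

end BoolSide

section Zfin

/-- the `j`-th smallest element of `s`, extended by large values -/
noncomputable def zfin (s : Finset ℕ) (n j : ℕ) : ℕ :=
  if h : j < s.card then s.orderEmbOfFin rfl ⟨j, h⟩ else n + j

lemma zfin_mem {s : Finset ℕ} {n j : ℕ} (h : j < s.card) : zfin s n j ∈ s := by
  rw [zfin, dif_pos h]
  exact Finset.orderEmbOfFin_mem s rfl ⟨j, h⟩

lemma zfin_smono {s : Finset ℕ} {n : ℕ} (hs : ∀ x ∈ s, x < n) :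
    StrictMono (zfin s n) := by
  intro j1 j2 hj
  rw [zfin, zfin]
  split_ifs with h1 h2 h2
  · exact (s.orderEmbOfFin rfl).strictMono (show (⟨j1, h1⟩ : Fin _) < ⟨j2, h2⟩ from hj)
  · exact lt_of_lt_of_le (hs _ (Finset.orderEmbOfFin_mem s rfl ⟨j1, h1⟩)) (by omega)
  · omega
  · omega

lemma zfin_surj {s : Finset ℕ} {n x : ℕ} (hx : x ∈ s) :
    ∃ j, ∃ h : j < s.card, zfin s n j = x := by
  have : x ∈ Set.range (s.orderEmbOfFin rfl) := by
    rw [Finset.range_orderEmbOfFin]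
    exact hx
  obtain ⟨⟨j, hj⟩, he⟩ := this
  exact ⟨j, hj, by rw [zfin, dif_pos hj]; exact he⟩

lemma zfin_eq_of {s : Finset ℕ} {n : ℕ} {g : ℕ → ℕ}
    (hmem : ∀ j, j < s.card → g j ∈ s)
    (hmono : ∀ j1 j2, j1 < j2 → j2 < s.card → g j1 < g j2) :
    ∀ j, j < s.card → zfin s n j = g j := by
  have hu : (fun j : Fin s.card => g j.val) = s.orderEmbOfFin rfl := by
    apply Finset.orderEmbOfFin_unique rfl (fun x => hmem x.val x.isLt)
    intro j1 j2 h
    exact hmono _ _ h j2.isLt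
  intro j hj
  rw [zfin, dif_pos hj]
  exact (congrFun hu ⟨j, hj⟩).symm

lemma smono_gap {f : ℕ → ℕ} (hf : StrictMono f) (i d : ℕ) : f i + d ≤ f (i + d) := by
  induction d with
  | zero => simp
  | succ d ih =>
    have h2 := hf (show i + d < i + d + 1 by omega)
    rw [show i + (d + 1) = i + d + 1 from rfl]
    omega

lemma smono_le {f : ℕ → ℕ} (hf : StrictMono f) (i : ℕ) : i ≤ f i := by
  have := smono_gap hf 0 i
  simp only [Nat.zero_add] at this
  omega

end Zfin

section Invariant
variable {b : ℕ → Bool} {n : ℕ}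

lemma Zb_all_lt {t : ℕ} : ∀ x ∈ Zb n b t, x < n := fun _ hx => mem_range.1 (mem_filter.1 hx).1

lemma zfin_lt_n {t j : ℕ} (hj : j < (Zb n b t).card) : zfin (Zb n b t) n j < n :=
  mem_range.1 (mem_filter.1 (zfin_mem hj)).1

lemma zfun_succ (hb : ∀ q, n ≤ q → b q = true) (t j : ℕ) (hj : j < (Zb n b 0).card) :
    zfin (Zb n b (t + 1)) n j = phi t (run b t) (zfin (Zb n b t) n j) := by
  have hct : (Zb n b t).card = (Zb n b 0).card := card_Zb hb t
  have hc1 : (Zb n b (t + 1)).card = (Zb n b 0).card := card_Zb hb (t + 1)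
  have hcim : ((Zb n b t).image (phi t (run b t))).card = (Zb n b t).card := by
    rw [← Zb_succ hb t, hc1, hct]
  rw [Zb_succ hb t]
  refine zfin_eq_of (n := n) (g := fun j' => phi t (run b t) (zfin (Zb n b t) n j'))
      ?_ ?_ j ?_
  · intro j' hj'
    rw [hcim] at hj'
    exact mem_image.2 ⟨_, zfin_mem hj', rfl⟩
  · intro j1 j2 h12 hj2
    rw [hcim] at hj2
    have hj1 : j1 < (Zb n b t).card := lt_trans h12 hj2
    exact phi_smono ((mem_Zb hb).1 (zfin_mem hj1)) ((mem_Zb hb).1 (zfin_mem hj2))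
      (zfin_smono Zb_all_lt h12)
  · rw [hcim]
    omega

lemma inv (hb : ∀ q, n ≤ q → b q = true) :
    ∀ t j, j < (Zb n b 0).card →
      zfin (Zb n b t) n j ≤ j ∨
      zfin (Zb n b t) n j + t ≤ zfin (Zb n b 0) n j + j + 1 := by
  intro t
  induction t with
  | zero =>
    intro j hj
    right
    omega
  | succ t ih =>
    intro j hj
    rw [zfun_succ hb t j hj]
    have hct : (Zb n b t).card = (Zb n b 0).card := card_Zb hb t
    have hjt : j < (Zb n b t).card := by omega
    set z := zfin (Zb n b t) n j with hzdef
    have hz0 : run b t z = false := (mem_Zb hb).1 (zfin_mem hjt)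
    rcases ih j hj with hle | hbound
    · left
      exact le_trans (phi_le _ _ _) hle
    · by_cases hmv : mv t (run b t) z
      · right
        rw [phi, if_pos hmv]
        have := hmv.1
        omega
      · rw [phi, if_neg hmv]
        by_cases hzj : z ≤ j
        · left; exact hzj
        · right
          push_neg at hzj
          have hz1 : 1 ≤ z := by omega
          cases hB : run b t (z - 1) with
          | true =>
            have hpar : ¬ (z - 1) % 2 = t % 2 := by
              intro hp
              exact hmv ⟨hz1, hp, hB⟩
            cases t with
            | zero => omega
            | succ s =>
              exfalso
              have h2 : step s (run b s) (z - 1) = true := hB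
              have hL := L1 (s := s) (q := z - 1) ?_ h2
              · exact hpar (by omega)
              · rw [show z - 1 + 1 = z by omega]
                exact hz0
          | false =>
            have hm : z - 1 ∈ Zb n b t := (mem_Zb hb).2 hB
            obtain ⟨i, hi, hzi⟩ := zfin_surj (n := n) hm
            have hlt : zfin (Zb n b t) n i < zfin (Zb n b t) n j := by
              rw [hzi, ← hzdef]
              omega
            have hij : i < j := (zfin_smono Zb_all_lt).lt_iff_lt.1 hlt
            rcases ih i (by omega) with h1 | h2
            · omega
            · have hgap := smono_gap (zfin_smono (Zb_all_lt (n := n) (b := b) (t := 0))) i (j - i)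
              rw [show i + (j - i) = j by omega] at hgap
              omega

/-- after `n` rounds the 0-1 sequence is sorted: zeros exactly fill an initial segment -/
lemma run_final (hb : ∀ q, n ≤ q → b q = true) :
    ∀ p, run b n p = false ↔ p < (Zb n b 0).card := by
  have hcn : (Zb n b n).card = (Zb n b 0).card := card_Zb hb n
  have hid : ∀ j, j < (Zb n b 0).card → zfin (Zb n b n) n j = j := by
    intro j hj
    have hjt : j < (Zb n b n).card := by omega
    have h1 : j ≤ zfin (Zb n b n) n j := smono_le (zfin_smono Zb_all_lt) j
    rcases inv hb n j hj with h | h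
    · omega
    · have hz0 : zfin (Zb n b 0) n j < n := zfin_lt_n (by omega)
      omega
  intro p
  constructor
  · intro hp
    obtain ⟨j, hj, hje⟩ := zfin_surj (n := n) ((mem_Zb hb).2 hp)
    have := hid j (by omega)
    omega
  · intro hp
    have h2 := zfin_mem (n := n) (show p < (Zb n b n).card by omega)
    rw [hid p hp] at h2
    exact (mem_Zb hb).1 h2

end Invariant

section NatSide

def GoodA (n : ℕ) (a : ℕ → ℕ) : Prop :=
  Function.Injective a ∧ (∀ p, p < n → a p < n) ∧ ∀ p, n ≤ p → a p = p

lemma goodA_step {n t : ℕ} {a : ℕ → ℕ} (h : GoodA n a) : GoodA n (step t a) := by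
  obtain ⟨hinj, hlt, hid⟩ := h
  refine ⟨step_inj hinj t, ?_, ?_⟩
  · intro p hp
    rw [step]
    split_ifs with hb2
    · exact lt_of_le_of_lt (min_le_left _ _) (hlt p hp)
    · exact max_lt (hlt _ (by omega)) (hlt p hp)
  · intro p hp
    rw [step]
    split_ifs with hb2
    · rw [hid p hp, hid (p + 1) (by omega)]
      exact min_eq_left (by omega)
    · have h1 : a (p - 1) ≤ p := by
        rcases lt_or_ge (p - 1) n with h | h
        · have := hlt _ h
          omega
        · rw [hid _ h]
          omega
      rw [hid p hp]
      exact max_eq_right h1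

lemma goodA_run {n : ℕ} {a : ℕ → ℕ} (h : GoodA n a) (t : ℕ) : GoodA n (run a t) := by
  induction t with
  | zero => exact h
  | succ t ih => exact goodA_step ih

lemma run_mono_adj {n : ℕ} {a : ℕ → ℕ} (h : GoodA n a) {p : ℕ} (hp : p + 1 < n) :
    run a n p ≤ run a n (p + 1) := by
  by_contra hc
  push_neg at hc
  set v := run a n (p + 1) with hv
  have hvn : v < n := (goodA_run h n).2.1 _ (by omega)
  have hmono : Monotone (fun x : ℕ => decide (v < x)) := by
    intro x y hxy
    by_cases hvx : v < x
    · have h2 : v < y := lt_of_lt_of_le hvx hxy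
      simp [hvx, h2]
    · simp [hvx]
  set f := fun x : ℕ => decide (v < x) with hf
  have hb : ∀ q, n ≤ q → (f ∘ a) q = true := by
    intro q hq
    simp only [Function.comp_apply, h.2.2 q hq, hf]
    simp [lt_of_lt_of_le hvn hq]
  have hcomm := run_comp hmono a n
  have h1 : run (f ∘ a) n (p + 1) = false := by
    rw [hcomm]
    simp [hf]
    exact hv.symm.le
  have h2 : run (f ∘ a) n p = true := by
    rw [hcomm]
    simp only [Function.comp_apply, hf, decide_eq_true_eq]
    exact hc
  have hfin := run_final hb
  have hp1 := (hfin (p + 1)).1 h1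
  have hp2 : run (f ∘ a) n p = false := (hfin p).2 (by omega)
  rw [h2] at hp2
  exact absurd hp2 (by simp)

lemma run_id {n : ℕ} {a : ℕ → ℕ} (h : GoodA n a) : ∀ p, p < n → run a n p = p := by
  have hg := goodA_run h n
  have hstrict : ∀ p, p + 1 < n → run a n p < run a n (p + 1) := by
    intro p hp
    have h1 := run_mono_adj h hp
    rcases lt_or_eq_of_le h1 with h2 | h2
    · exact h2
    · exact absurd (hg.1 h2) (by omega)
  have hupper : ∀ d p, p + d + 1 = n → run a n p ≤ p := by
    intro d
    induction d with
    | zero =>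
      intro p hp
      have := hg.2.1 p (by omega)
      omega
    | succ d ih =>
      intro p hp
      have h1 := hstrict p (by omega)
      have h2 := ih (p + 1) (by omega)
      omega
  have hlower : ∀ p, p < n → p ≤ run a n p := by
    intro p
    induction p with
    | zero => omega
    | succ p ih =>
      intro hp
      have h1 := hstrict p (by omega)
      have h2 := ih (by omega)
      omega
  intro p hp
  have h1 := hupper (n - p - 1) p (by omega)
  have h2 := hlower p hp
  omega

end NatSide


section Assembly

variable {n : ℕ}

/-- initial array of targets: position `p` holds the final position of the wire at `p` -/
def a0 (n : ℕ) (π σ : Equiv.Perm (Fin n)) : ℕ → ℕ := fun p =>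
  if h : p < n then (σ (π.symm ⟨p, h⟩)).val else p

lemma goodA_a0 (π σ : Equiv.Perm (Fin n)) : GoodA n (a0 n π σ) := by
  refine ⟨?_, ?_, ?_⟩
  · intro p q h
    simp only [a0] at h
    by_cases hp : p < n <;> by_cases hq : q < n
    · rw [dif_pos hp, dif_pos hq] at h
      have h2 := σ.injective (Fin.ext h)
      have h3 : (⟨p, hp⟩ : Fin n) = ⟨q, hq⟩ := π.symm.injective h2
      exact congrArg Fin.val h3
    · rw [dif_pos hp, dif_neg hq] at h
      have := (σ (π.symm ⟨p, hp⟩)).isLt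
      omega
    · rw [dif_neg hp, dif_pos hq] at h
      have := (σ (π.symm ⟨q, hq⟩)).isLt
      omega
    · rwa [dif_neg hp, dif_neg hq] at h
  · intro p hp
    simp only [a0, dif_pos hp]
    exact (σ (π.symm ⟨p, hp⟩)).isLt
  · intro p hp
    simp only [a0, dif_neg (by omega : ¬ p < n)]

lemma goodA_arun (π σ : Equiv.Perm (Fin n)) (t : ℕ) : GoodA n (run (a0 n π σ) t) :=
  goodA_run (goodA_a0 π σ) t

noncomputable def Gp (π σ : Equiv.Perm (Fin n)) (t : ℕ) : Equiv.Perm (Fin n) :=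
  Equiv.ofBijective (fun p => ⟨run (a0 n π σ) t p.val, (goodA_arun π σ t).2.1 _ p.isLt⟩)
    (Finite.injective_iff_bijective.1 (by
      intro p q h
      have h2 : run (a0 n π σ) t p.val = run (a0 n π σ) t q.val := congrArg Fin.val h
      exact Fin.ext ((goodA_arun π σ t).1 h2)))

/-- the tangle: wire `i` sits at time `t` at the position of value `σ i` in the array -/
noncomputable def Tt (π σ : Equiv.Perm (Fin n)) (t : ℕ) : Equiv.Perm (Fin n) :=
  σ.trans (Gp π σ t).symm

lemma Gp_val (π σ : Equiv.Perm (Fin n)) (t : ℕ) (p : Fin n) :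
    ((Gp π σ t) p).val = run (a0 n π σ) t p.val := rfl

lemma Tt_pos (π σ : Equiv.Perm (Fin n)) (t : ℕ) (i : Fin n) :
    run (a0 n π σ) t ((Tt π σ t i).val) = (σ i).val := by
  have h := (Gp π σ t).apply_symm_apply (σ i)
  have h2 := congrArg Fin.val h
  rw [Gp_val] at h2
  exact h2

lemma Tt_zero (π σ : Equiv.Perm (Fin n)) : Tt π σ 0 = π := by
  apply Equiv.ext
  intro i
  show (Gp π σ 0).symm (σ i) = π i
  rw [Equiv.symm_apply_eq]
  apply Fin.ext
  rw [Gp_val]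
  show (σ i).val = a0 n π σ (π i).val
  simp only [a0, dif_pos (π i).isLt, Fin.eta, Equiv.symm_apply_apply]

lemma Tt_last (π σ : Equiv.Perm (Fin n)) : Tt π σ n = σ := by
  apply Equiv.ext
  intro i
  show (Gp π σ n).symm (σ i) = σ i
  rw [Equiv.symm_apply_eq]
  apply Fin.ext
  rw [Gp_val]
  exact (run_id (goodA_a0 π σ) (σ i).val (σ i).isLt).symm

lemma Tt_adj (π σ : Equiv.Perm (Fin n)) (t : ℕ) :
    Adjacent (Tt π σ t) (Tt π σ (t + 1)) := by
  intro i
  have hg1 := goodA_arun π σ (t + 1)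
  have hp : run (a0 n π σ) t ((Tt π σ t i).val) = (σ i).val := Tt_pos π σ t i
  obtain ⟨p', hrel, hstep⟩ := move t (run (a0 n π σ) t) ((Tt π σ t i).val)
  have hq : run (a0 n π σ) (t + 1) ((Tt π σ (t + 1) i).val) = (σ i).val := Tt_pos π σ (t + 1) i
  have hq' : run (a0 n π σ) (t + 1) p' = (σ i).val := by
    rw [run_succ, hstep, hp]
  have hval : (Tt π σ (t + 1) i).val = p' := hg1.1 (hq.trans hq'.symm)
  have h1 : ((Tt π σ t i : ℤ)) = ((Tt π σ t i).val : ℤ) := rfl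
  have h2 : ((Tt π σ (t + 1) i : ℤ)) = ((Tt π σ (t + 1) i).val : ℤ) := rfl
  rw [h1, h2, hval]
  omega

lemma persist_perm (π σ : Equiv.Perm (Fin n)) {i j : Fin n}
    (hv : (σ i).val < (σ j).val) (t : ℕ)
    (hP : (Tt π σ t i).val < (Tt π σ t j).val) :
    (Tt π σ (t + 1) i).val < (Tt π σ (t + 1) j).val := by
  have hg := goodA_arun π σ t
  apply persist (t := t) hg.1 hP
  · rw [Tt_pos π σ t i, Tt_pos π σ t j]
    exact hv
  · rw [Tt_pos π σ t i, ← run_succ]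
    exact Tt_pos π σ (t + 1) i
  · rw [Tt_pos π σ t j, ← run_succ]
    exact Tt_pos π σ (t + 1) j

lemma no_two (π σ : Equiv.Perm (Fin n)) {i j : Fin n}
    (hv : (σ i).val < (σ j).val) {t1 t2 : ℕ} (h12 : t1 < t2)
    (e1 : Tt π σ t1 i = Tt π σ (t1 + 1) j ∧ Tt π σ t1 j = Tt π σ (t1 + 1) i)
    (e2 : Tt π σ t2 i = Tt π σ (t2 + 1) j ∧ Tt π σ t2 j = Tt π σ (t2 + 1) i) : False := by
  have hij : i ≠ j := fun he => by rw [he] at hv; omega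
  have hne : ∀ s, (Tt π σ s i).val ≠ (Tt π σ s j).val := by
    intro s he
    exact hij ((Tt π σ s).injective (Fin.ext he))
  have wrong : ∀ s, (Tt π σ s i = Tt π σ (s + 1) j ∧ Tt π σ s j = Tt π σ (s + 1) i) →
      ¬ (Tt π σ s i).val < (Tt π σ s j).val := by
    intro s es hP
    have h1 := persist_perm π σ hv s hP
    rw [← es.1, ← es.2] at h1
    omega
  have hafter : (Tt π σ (t1 + 1) i).val < (Tt π σ (t1 + 1) j).val := by
    have hw := wrong t1 e1
    have h3 : (Tt π σ t1 j).val < (Tt π σ t1 i).val := by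
      have := hne t1
      omega
    rw [e1.2, e1.1] at h3
    exact h3
  have hall : ∀ d, (Tt π σ (t1 + 1 + d) i).val < (Tt π σ (t1 + 1 + d) j).val := by
    intro d
    induction d with
    | zero => exact hafter
    | succ d ih =>
      have := persist_perm π σ hv (t1 + 1 + d) ih
      rwa [show t1 + 1 + (d + 1) = t1 + 1 + d + 1 from rfl]
  have hw2 := wrong t2 e2
  have h2 := hall (t2 - t1 - 1)
  rw [show t1 + 1 + (t2 - t1 - 1) = t2 by omega] at h2
  exact hw2 h2

end Assembly

end OES

/-- For n ≥ 2 and permutations π, σ, there is a tangle of height at most n+1 from π to σ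
    whose list is simple. -/
theorem connecting_tangle (n : ℕ) (hn : 2 ≤ n) (π σ : Equiv.Perm (Fin n)) :
    ∃ (h : ℕ) (T : ℕ → Equiv.Perm (Fin n)), h ≤ n + 1 ∧ IsTangle T h ∧
      T 0 = π ∧ T (h - 1) = σ ∧ ∀ i j : Fin n, i ≠ j → SwapCount T h i j ≤ 1 := by
  refine ⟨n + 1, OES.Tt π σ, le_refl _, ⟨by omega, fun t _ => OES.Tt_adj π σ t⟩,
    OES.Tt_zero π σ, ?_, ?_⟩
  · show OES.Tt π σ (n + 1 - 1) = σ
    rw [show n + 1 - 1 = n from rfl]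
    exact OES.Tt_last π σ
  · intro i j hij
    rw [SwapCount]
    apply Finset.card_le_one.2
    intro t1 ht1 t2 ht2
    have e1 := (Finset.mem_filter.1 ht1).2
    have e2 := (Finset.mem_filter.1 ht2).2
    by_contra hne
    have hvne : (σ i).val ≠ (σ j).val := fun h => hij (σ.injective (Fin.ext h))
    rcases lt_or_gt_of_ne (show t1 ≠ t2 from hne) with ho | ho <;>
      rcases Nat.lt_or_ge (σ i).val (σ j).val with hv | hv
    · exact OES.no_two π σ hv ho e1 e2
    · exact OES.no_two π σ (show (σ j).val < (σ i).val by omega) ho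
        ⟨e1.2, e1.1⟩ ⟨e2.2, e2.1⟩
    · exact OES.no_two π σ hv ho e2 e1
    · exact OES.no_two π σ (show (σ j).val < (σ i).val by omega) ho
        ⟨e2.2, e2.1⟩ ⟨e1.2, e1.1⟩
end

section
/- If L = (l_{ij}) is a minimal feasible list of order n, then l_{ij} ≤ n²/4 + 1 for each pair i, j ∈ [n]. -/
open Finset

set_option maxHeartbeats 1600000

namespace TangleAux

variable {n : ℕ}

/-- wires x and y swap between time t and t+1 -/
def swapAt (T : ℕ → Equiv.Perm (Fin n)) (t : ℕ) (x y : Fin n) : Prop :=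
  T t x = T (t+1) y ∧ T t y = T (t+1) x

instance (T : ℕ → Equiv.Perm (Fin n)) (t : ℕ) (x y : Fin n) : Decidable (swapAt T t x y) :=
  decidable_of_iff (T t x = T (t+1) y ∧ T t y = T (t+1) x) Iff.rfl

lemma swapAt_symm {T : ℕ → Equiv.Perm (Fin n)} {t : ℕ} {x y : Fin n}
    (hs : swapAt T t x y) : swapAt T t y x := ⟨hs.2, hs.1⟩

lemma swapAt_comm {T : ℕ → Equiv.Perm (Fin n)} {t : ℕ} {x y : Fin n} :
    swapAt T t x y ↔ swapAt T t y x := ⟨swapAt_symm, swapAt_symm⟩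

lemma swapCount_eq (T : ℕ → Equiv.Perm (Fin n)) (h : ℕ) (x y : Fin n) :
    SwapCount T h x y = ((range (h-1)).filter fun t => swapAt T t x y).card :=
  congrArg Finset.card (Finset.filter_congr (fun _ _ => Iff.rfl))

lemma swapCount_comm (T : ℕ → Equiv.Perm (Fin n)) (h : ℕ) (x y : Fin n) :
    SwapCount T h x y = SwapCount T h y x := by
  unfold SwapCount
  exact congrArg Finset.card (Finset.filter_congr (fun _ _ => and_comm))

lemma pos_ne {T : ℕ → Equiv.Perm (Fin n)} {t : ℕ} {x y : Fin n} (hxy : x ≠ y) :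
    ((T t x : ℤ)) ≠ ((T t y : ℤ)) := by
  intro H
  have hval : (T t x).val = (T t y).val := by exact_mod_cast H
  exact hxy ((T t).injective (Fin.val_injective hval))

lemma adjacent_apply {π σ : Equiv.Perm (Fin n)} (hadj : Adjacent π σ) (a : Fin n) :
    ((π a : ℤ) - (σ a : ℤ)).natAbs ≤ 1 := hadj a

/-- at the two ends of a swap, the swapping wires are at distance one -/
lemma adj_at_swap {T : ℕ → Equiv.Perm (Fin n)} {h : ℕ} (hT : IsTangle T h) {u : ℕ} {x y : Fin n}
    (hu : u + 1 < h) (hxy : x ≠ y) (hs : swapAt T u x y) :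
    ((T (u+1) x : ℤ) - (T (u+1) y : ℤ)).natAbs = 1 ∧
      ((T u x : ℤ) - (T u y : ℤ)).natAbs = 1 := by
  have hadj := hT.2 u hu
  have h1 := adjacent_apply hadj x
  have e1 : ((T u x : ℤ)) = ((T (u+1) y : ℤ)) := by exact_mod_cast congrArg Fin.val hs.1
  have e2 : ((T u y : ℤ)) = ((T (u+1) x : ℤ)) := by exact_mod_cast congrArg Fin.val hs.2
  have d1 : ((T (u+1) x : ℤ)) ≠ ((T (u+1) y : ℤ)) := pos_ne hxy
  have d2 : ((T u x : ℤ)) ≠ ((T u y : ℤ)) := pos_ne hxy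
  omega

lemma swap_partner_unique {T : ℕ → Equiv.Perm (Fin n)} {t : ℕ} {x y m : Fin n}
    (h1 : swapAt T t x y) (h2 : swapAt T t x m) : m = y :=
  (T t).injective (h2.2.trans h1.2.symm)

/-- the relative order of x and m flips between t and t+1 iff they swap at t -/
lemma flip_iff_swap {T : ℕ → Equiv.Perm (Fin n)} {h : ℕ} (hT : IsTangle T h) {t : ℕ} {x m : Fin n}
    (ht : t + 1 < h) (hxm : x ≠ m) :
    swapAt T t x m ↔ ¬ (((T t m : ℤ) < (T t x : ℤ)) ↔ ((T (t+1) m : ℤ) < (T (t+1) x : ℤ))) := by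
  have hadj := hT.2 t ht
  have hx := adjacent_apply hadj x
  have hm := adjacent_apply hadj m
  have d1 : ((T t m : ℤ)) ≠ ((T t x : ℤ)) := pos_ne (Ne.symm hxm)
  have d2 : ((T (t+1) m : ℤ)) ≠ ((T (t+1) x : ℤ)) := pos_ne (Ne.symm hxm)
  constructor
  · intro hs
    have e1 : ((T t x : ℤ)) = ((T (t+1) m : ℤ)) := by exact_mod_cast congrArg Fin.val hs.1
    have e2 : ((T t m : ℤ)) = ((T (t+1) x : ℤ)) := by exact_mod_cast congrArg Fin.val hs.2
    omega
  · intro hflip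
    have e1 : ((T t x : ℤ)) = ((T (t+1) m : ℤ)) ∧ ((T t m : ℤ)) = ((T (t+1) x : ℤ)) := by omega
    constructor
    · have : (T t x).val = (T (t+1) m).val := by exact_mod_cast e1.1
      exact Fin.val_injective this
    · have : (T t m).val = (T (t+1) x).val := by exact_mod_cast e1.2
      exact Fin.val_injective this

/-- telescoping: parity of the number of swaps of (x,m) in [a,b) determines whether the
relative order of x and m changes between a and b. -/
lemma parity_count {T : ℕ → Equiv.Perm (Fin n)} {h : ℕ} (hT : IsTangle T h) {x m : Fin n}
    (hxm : x ≠ m) {a : ℕ} :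
    ∀ b, a ≤ b → b < h →
      ((((Finset.Ico a b).filter fun t => swapAt T t x m).card) % 2 = 0 ↔
        (((T a m : ℤ) < (T a x : ℤ)) ↔ ((T b m : ℤ) < (T b x : ℤ)))) := by
  intro b
  induction b with
  | zero =>
    intro hab _
    interval_cases a
    simp
  | succ b ih =>
    intro hab hbh
    rcases Nat.eq_or_lt_of_le hab with heq | hlt
    · subst heq
      simp
    · have hab' : a ≤ b := by omega
      have hbh' : b < h := by omega
      have IH := ih hab' hbh'
      have hins : Finset.Ico a (b+1) = insert b (Finset.Ico a b) := by
        rw [Nat.Ico_succ_right_eq_insert_Ico hab']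
      rw [hins, Finset.filter_insert]
      have hnotmem : b ∉ (Finset.Ico a b).filter fun t => swapAt T t x m := by
        intro hmem
        exact absurd (Finset.mem_Ico.mp (Finset.mem_filter.mp hmem).1).2 (lt_irrefl b)
      have hflip := flip_iff_swap hT (show b + 1 < h by omega) hxm
      by_cases hs : swapAt T b x m
      · rw [if_pos hs, Finset.card_insert_of_notMem hnotmem]
        rw [hflip] at hs
        rw [show ∀ c : ℕ, ((c + 1) % 2 = 0 ↔ ¬ (c % 2 = 0)) from by omega, IH]
        tauto
      · rw [if_neg hs, IH]
        rw [hflip] at hs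
        push_neg at hs
        tauto

/-- parity of the number of crossings of m with x, resp. with y, inside a lens of (x,y) agree -/
lemma lens_parity {T : ℕ → Equiv.Perm (Fin n)} {h : ℕ} (hT : IsTangle T h) {x y m : Fin n}
    {u u' : ℕ} (hxy : x ≠ y) (hmx : m ≠ x) (hmy : m ≠ y) (huu : u < u') (hu' : u' + 1 < h)
    (su : swapAt T u x y) (su' : swapAt T u' x y) :
    (((Finset.Ioo u u').filter fun t => swapAt T t x m).card) % 2 =
    (((Finset.Ioo u u').filter fun t => swapAt T t y m).card) % 2 := by
  have hu1 : u + 1 < h := by omega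
  have hIco : Finset.Ioo u u' = Finset.Ico (u+1) u' := by
    ext t; simp only [Finset.mem_Ioo, Finset.mem_Ico]; omega
  have hx := parity_count hT (Ne.symm hmx) (a := u+1) u' (by omega) (by omega)
  have hy := parity_count hT (Ne.symm hmy) (a := u+1) u' (by omega) (by omega)
  -- endpoints: m is on the same side of x and y at times u+1 and u'
  have hadj1 := adj_at_swap hT hu1 hxy su
  have hadj2 := adj_at_swap hT hu' hxy su'
  have dmx1 : ((T (u+1) m : ℤ)) ≠ ((T (u+1) x : ℤ)) := pos_ne hmx
  have dmy1 : ((T (u+1) m : ℤ)) ≠ ((T (u+1) y : ℤ)) := pos_ne hmy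
  have dmx2 : ((T u' m : ℤ)) ≠ ((T u' x : ℤ)) := pos_ne hmx
  have dmy2 : ((T u' m : ℤ)) ≠ ((T u' y : ℤ)) := pos_ne hmy
  obtain ⟨A1, A2⟩ := hadj1
  obtain ⟨B1, B2⟩ := hadj2
  have e1 : ((T (u+1) m : ℤ) < (T (u+1) x : ℤ)) ↔ ((T (u+1) m : ℤ) < (T (u+1) y : ℤ)) := by
    omega
  have e2 : ((T u' m : ℤ) < (T u' x : ℤ)) ↔ ((T u' m : ℤ) < (T u' y : ℤ)) := by
    omega
  rw [hIco]
  have key : (((Finset.Ico (u+1) u').filter fun t => swapAt T t x m).card) % 2 = 0 ↔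
      (((Finset.Ico (u+1) u').filter fun t => swapAt T t y m).card) % 2 = 0 := by
    rw [hx, hy]
    tauto
  omega

/-! ### Surgery: exchanging the trajectories of `x` and `y` on the window `(u, u']` -/

def tweak (T : ℕ → Equiv.Perm (Fin n)) (u u' : ℕ) (x y : Fin n) : ℕ → Equiv.Perm (Fin n) :=
  fun t => if u < t ∧ t ≤ u' then T t * Equiv.swap x y else T t

lemma tweak_comm (T : ℕ → Equiv.Perm (Fin n)) (u u' : ℕ) (x y : Fin n) :
    tweak T u u' x y = tweak T u u' y x := by
  unfold tweak
  rw [Equiv.swap_comm]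

lemma tweak_apply_out {T : ℕ → Equiv.Perm (Fin n)} {u u' t : ℕ} (hc : ¬(u < t ∧ t ≤ u'))
    (x y a : Fin n) : tweak T u u' x y t a = T t a := by
  simp [tweak, hc]

lemma tweak_apply_in {T : ℕ → Equiv.Perm (Fin n)} {u u' t : ℕ} (hc : u < t ∧ t ≤ u')
    (x y a : Fin n) : tweak T u u' x y t a = T t (Equiv.swap x y a) := by
  simp only [tweak, if_pos hc, Equiv.Perm.mul_apply]

section Surgery

variable {T : ℕ → Equiv.Perm (Fin n)} {h : ℕ} {x y : Fin n} {u u' : ℕ}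

lemma zone (huu : u < u') (t : ℕ) :
    t < u ∨ t = u ∨ (u < t ∧ t < u') ∨ t = u' ∨ u' < t := by omega

lemma swapAt_tweak_outside (htz : t < u ∨ u' < t) (a b : Fin n) :
    swapAt (tweak T u u' x y) t a b ↔ swapAt T t a b := by
  have c1 : ¬(u < t ∧ t ≤ u') := by omega
  have c2 : ¬(u < t+1 ∧ t+1 ≤ u') := by omega
  simp only [swapAt, tweak_apply_out c1, tweak_apply_out c2]

lemma swapAt_tweak_mid (h1 : u < t) (h2 : t < u') (a b : Fin n) :
    swapAt (tweak T u u' x y) t a b ↔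
      swapAt T t (Equiv.swap x y a) (Equiv.swap x y b) := by
  have c1 : u < t ∧ t ≤ u' := by omega
  have c2 : u < t+1 ∧ t+1 ≤ u' := by omega
  simp only [swapAt, tweak_apply_in c1, tweak_apply_in c2]

lemma swapAt_tweak_left (hxy : x ≠ y) (huu : u < u') (su : swapAt T u x y)
    {a b : Fin n} (hab : a ≠ b) :
    swapAt (tweak T u u' x y) u a b ↔
      (swapAt T u a b ∧ a ≠ x ∧ a ≠ y ∧ b ≠ x ∧ b ≠ y) := by
  have c1 : ¬(u < u ∧ u ≤ u') := by omega
  have c2 : u < u+1 ∧ u+1 ≤ u' := by omega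
  simp only [swapAt, tweak_apply_out c1, tweak_apply_in c2]
  by_cases hax : a = x
  · subst hax
    simp only [Equiv.swap_apply_left]
    constructor
    · rintro ⟨-, h2⟩
      exact absurd ((T u).injective (h2.trans su.1.symm)).symm hab
    · rintro ⟨-, hx, -⟩
      exact absurd rfl hx
  · by_cases hay : a = y
    · subst hay
      simp only [Equiv.swap_apply_right]
      constructor
      · rintro ⟨-, h2⟩
        exact absurd ((T u).injective (h2.trans su.2.symm)).symm hab
      · rintro ⟨-, -, hy, -⟩
        exact absurd rfl hy
    · by_cases hbx : b = x
      · subst hbx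
        simp only [Equiv.swap_apply_left]
        constructor
        · rintro ⟨h1, -⟩
          exact absurd ((T u).injective (h1.trans su.1.symm)) hax
        · rintro ⟨-, -, -, hx, -⟩
          exact absurd rfl hx
      · by_cases hby : b = y
        · subst hby
          simp only [Equiv.swap_apply_right]
          constructor
          · rintro ⟨h1, -⟩
            exact absurd ((T u).injective (h1.trans su.2.symm)) hay
          · rintro ⟨-, -, -, -, hy⟩
            exact absurd rfl hy
        · rw [Equiv.swap_apply_of_ne_of_ne hax hay, Equiv.swap_apply_of_ne_of_ne hbx hby]
          simp [swapAt, hax, hay, hbx, hby]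

lemma swapAt_tweak_right (hxy : x ≠ y) (huu : u < u') (su' : swapAt T u' x y)
    {a b : Fin n} (hab : a ≠ b) :
    swapAt (tweak T u u' x y) u' a b ↔
      (swapAt T u' a b ∧ a ≠ x ∧ a ≠ y ∧ b ≠ x ∧ b ≠ y) := by
  have c1 : u < u' ∧ u' ≤ u' := by omega
  have c2 : ¬(u < u'+1 ∧ u'+1 ≤ u') := by omega
  simp only [swapAt, tweak_apply_in c1, tweak_apply_out c2]
  by_cases hax : a = x
  · subst hax
    simp only [Equiv.swap_apply_left]
    constructor
    · rintro ⟨h1, -⟩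
      exact absurd ((T (u'+1)).injective (su'.2.symm.trans h1)) hab
    · rintro ⟨-, hx, -⟩
      exact absurd rfl hx
  · by_cases hay : a = y
    · subst hay
      simp only [Equiv.swap_apply_right]
      constructor
      · rintro ⟨h1, -⟩
        exact absurd ((T (u'+1)).injective (su'.1.symm.trans h1)) hab
      · rintro ⟨-, -, hy, -⟩
        exact absurd rfl hy
    · by_cases hbx : b = x
      · subst hbx
        simp only [Equiv.swap_apply_left]
        constructor
        · rintro ⟨-, h2⟩
          exact absurd ((T (u'+1)).injective (su'.2.symm.trans h2)).symm hax
        · rintro ⟨-, -, -, hx, -⟩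
          exact absurd rfl hx
      · by_cases hby : b = y
        · subst hby
          simp only [Equiv.swap_apply_right]
          constructor
          · rintro ⟨-, h2⟩
            exact absurd ((T (u'+1)).injective (su'.1.symm.trans h2)).symm hay
          · rintro ⟨-, -, -, -, hy⟩
            exact absurd rfl hy
        · rw [Equiv.swap_apply_of_ne_of_ne hax hay, Equiv.swap_apply_of_ne_of_ne hbx hby]
          simp [swapAt, hax, hay, hbx, hby]

lemma tweak_tangle (hT : IsTangle T h) (hxy : x ≠ y) (huu : u < u') (hu' : u' < h - 1)
    (su : swapAt T u x y) (su' : swapAt T u' x y) :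
    IsTangle (tweak T u u' x y) h := by
  refine ⟨hT.1, fun t ht => ?_⟩
  intro a
  by_cases c1 : u < t ∧ t ≤ u' <;> by_cases c2 : u < t+1 ∧ t+1 ≤ u'
  · simp only [tweak_apply_in c1, tweak_apply_in c2]
    exact hT.2 t ht (Equiv.swap x y a)
  · -- t = u'
    have htu : t = u' := by omega
    have su2 : swapAt T t x y := htu ▸ su'
    simp only [tweak_apply_in c1, tweak_apply_out c2]
    by_cases hax : a = x
    · subst hax
      rw [Equiv.swap_apply_left, su2.2]
      simp
    · by_cases hay : a = y
      · subst hay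
        rw [Equiv.swap_apply_right, su2.1]
        simp
      · rw [Equiv.swap_apply_of_ne_of_ne hax hay]
        exact hT.2 t ht a
  · -- t = u
    have htu : t = u := by omega
    have su2 : swapAt T t x y := htu ▸ su
    simp only [tweak_apply_out c1, tweak_apply_in c2]
    by_cases hax : a = x
    · subst hax
      rw [Equiv.swap_apply_left, su2.1]
      simp
    · by_cases hay : a = y
      · subst hay
        rw [Equiv.swap_apply_right, su2.2]
        simp
      · rw [Equiv.swap_apply_of_ne_of_ne hax hay]
        exact hT.2 t ht a
  · simp only [tweak_apply_out c1, tweak_apply_out c2]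
    exact hT.2 t ht a

lemma tweak_count_xy (hxy : x ≠ y) (huu : u < u') (hu' : u' < h - 1)
    (su : swapAt T u x y) (su' : swapAt T u' x y) :
    ((range (h-1)).filter fun t => swapAt (tweak T u u' x y) t x y).card =
      ((range (h-1)).filter fun t => swapAt T t x y).card - 2 := by
  have hset : ((range (h-1)).filter fun t => swapAt (tweak T u u' x y) t x y) =
      ((range (h-1)).filter fun t => swapAt T t x y) \ {u, u'} := by
    ext t
    simp only [Finset.mem_filter, Finset.mem_sdiff, Finset.mem_range, Finset.mem_insert,
      Finset.mem_singleton]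
    constructor
    · rintro ⟨htr, hsw⟩
      rcases zone huu t with hz | rfl | ⟨hz1, hz2⟩ | rfl | hz
      · rw [swapAt_tweak_outside (Or.inl hz)] at hsw
        exact ⟨⟨htr, hsw⟩, by omega⟩
      · exfalso
        rw [swapAt_tweak_left hxy huu su hxy] at hsw
        exact hsw.2.1 rfl
      · rw [swapAt_tweak_mid hz1 hz2, Equiv.swap_apply_left, Equiv.swap_apply_right] at hsw
        exact ⟨⟨htr, swapAt_symm hsw⟩, by omega⟩
      · exfalso
        rw [swapAt_tweak_right hxy huu su' hxy] at hsw
        exact hsw.2.1 rfl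
      · rw [swapAt_tweak_outside (Or.inr hz)] at hsw
        exact ⟨⟨htr, hsw⟩, by omega⟩
    · rintro ⟨⟨htr, hsw⟩, hne⟩
      refine ⟨htr, ?_⟩
      rcases zone huu t with hz | rfl | ⟨hz1, hz2⟩ | rfl | hz
      · rwa [swapAt_tweak_outside (Or.inl hz)]
      · exact absurd (by omega) hne
      · rw [swapAt_tweak_mid hz1 hz2, Equiv.swap_apply_left, Equiv.swap_apply_right]
        exact swapAt_symm hsw
      · exact absurd (by omega) hne
      · rwa [swapAt_tweak_outside (Or.inr hz)]
  rw [hset, Finset.card_sdiff_of_subset]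
  · congr 1
    rw [Finset.card_pair (by omega : u ≠ u')]
  · intro t ht
    simp only [Finset.mem_insert, Finset.mem_singleton] at ht
    simp only [Finset.mem_filter, Finset.mem_range]
    rcases ht with rfl | rfl
    · exact ⟨by omega, su⟩
    · exact ⟨by omega, su'⟩

lemma tweak_count_xm (hxy : x ≠ y) (huu : u < u') (hu' : u' < h - 1)
    (su : swapAt T u x y) (su' : swapAt T u' x y) {m : Fin n} (hmx : m ≠ x) (hmy : m ≠ y)
    (hdm : ((Finset.Ioo u u').filter fun t => swapAt T t x m).card =
           ((Finset.Ioo u u').filter fun t => swapAt T t y m).card) :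
    ((range (h-1)).filter fun t => swapAt (tweak T u u' x y) t x m).card =
      ((range (h-1)).filter fun t => swapAt T t x m).card := by
  have hxm : x ≠ m := Ne.symm hmx
  have key : ((range (h-1)).filter fun t => swapAt (tweak T u u' x y) t x m) =
      (((range (h-1)).filter fun t => swapAt T t x m).filter fun t => ¬(u < t ∧ t < u')) ∪
      ((Finset.Ioo u u').filter fun t => swapAt T t y m) := by
    ext t
    simp only [Finset.mem_filter, Finset.mem_union, Finset.mem_range, Finset.mem_Ioo]
    constructor
    · rintro ⟨htr, hsw⟩
      rcases zone huu t with hz | rfl | ⟨hz1, hz2⟩ | rfl | hz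
      · rw [swapAt_tweak_outside (Or.inl hz)] at hsw
        exact Or.inl ⟨⟨htr, hsw⟩, by omega⟩
      · exfalso
        rw [swapAt_tweak_left hxy huu su hxm] at hsw
        exact hsw.2.1 rfl
      · rw [swapAt_tweak_mid hz1 hz2, Equiv.swap_apply_left,
          Equiv.swap_apply_of_ne_of_ne hmx hmy] at hsw
        exact Or.inr ⟨⟨hz1, hz2⟩, hsw⟩
      · exfalso
        rw [swapAt_tweak_right hxy huu su' hxm] at hsw
        exact hsw.2.1 rfl
      · rw [swapAt_tweak_outside (Or.inr hz)] at hsw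
        exact Or.inl ⟨⟨htr, hsw⟩, by omega⟩
    · rintro (⟨⟨htr, hsw⟩, hcond⟩ | ⟨⟨h1, h2⟩, hsw⟩)
      · refine ⟨htr, ?_⟩
        rcases zone huu t with hz | rfl | ⟨hz1, hz2⟩ | rfl | hz
        · rwa [swapAt_tweak_outside (Or.inl hz)]
        · exact absurd (swap_partner_unique su hsw) hmy
        · exact absurd ⟨hz1, hz2⟩ hcond
        · exact absurd (swap_partner_unique su' hsw) hmy
        · rwa [swapAt_tweak_outside (Or.inr hz)]
      · refine ⟨by omega, ?_⟩
        rw [swapAt_tweak_mid h1 h2, Equiv.swap_apply_left,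
          Equiv.swap_apply_of_ne_of_ne hmx hmy]
        exact hsw
  rw [key, Finset.card_union_of_disjoint]
  · have hsplit := Finset.card_filter_add_card_filter_not
      (s := (range (h-1)).filter fun t => swapAt T t x m) (p := fun t => u < t ∧ t < u')
    have hinner : (((range (h-1)).filter fun t => swapAt T t x m).filter
        fun t => u < t ∧ t < u') = ((Finset.Ioo u u').filter fun t => swapAt T t x m) := by
      ext t
      simp only [Finset.mem_filter, Finset.mem_range, Finset.mem_Ioo]
      constructor
      · rintro ⟨⟨h1, h2⟩, h3⟩
        exact ⟨⟨h3.1, h3.2⟩, h2⟩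
      · rintro ⟨⟨h1, h2⟩, h3⟩
        exact ⟨⟨by omega, h3⟩, ⟨h1, h2⟩⟩
    rw [hinner] at hsplit
    omega
  · rw [Finset.disjoint_left]
    rintro t ht ht2
    simp only [Finset.mem_filter, Finset.mem_Ioo] at ht ht2
    exact ht.2 ⟨ht2.1.1, ht2.1.2⟩

lemma tweak_count_other (hxy : x ≠ y) (huu : u < u') (su : swapAt T u x y)
    (su' : swapAt T u' x y) {a b : Fin n} (hab : a ≠ b)
    (hax : a ≠ x) (hay : a ≠ y) (hbx : b ≠ x) (hby : b ≠ y) :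
    ((range (h-1)).filter fun t => swapAt (tweak T u u' x y) t a b) =
      ((range (h-1)).filter fun t => swapAt T t a b) := by
  apply Finset.filter_congr
  intro t _
  rcases zone huu t with hz | rfl | ⟨hz1, hz2⟩ | rfl | hz
  · exact swapAt_tweak_outside (Or.inl hz) a b
  · rw [swapAt_tweak_left hxy huu su hab]
    simp [hax, hay, hbx, hby]
  · rw [swapAt_tweak_mid hz1 hz2, Equiv.swap_apply_of_ne_of_ne hax hay,
      Equiv.swap_apply_of_ne_of_ne hbx hby]
  · rw [swapAt_tweak_right hxy huu su' hab]
    simp [hax, hay, hbx, hby]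
  · exact swapAt_tweak_outside (Or.inr hz) a b

end Surgery

/-! ### The surgery produces a feasible reduced list -/

lemma surgery {T : ℕ → Equiv.Perm (Fin n)} {h : ℕ} {l : Fin n → Fin n → ℕ}
    (hreal : Realizes T h l) {x y : Fin n} {u u' : ℕ}
    (hxy : x ≠ y) (huu : u < u') (hu' : u' < h - 1)
    (su : swapAt T u x y) (su' : swapAt T u' x y)
    (hdrift : ∀ m, m ≠ x → m ≠ y →
      ((Finset.Ioo u u').filter fun t => swapAt T t x m).card =
      ((Finset.Ioo u u').filter fun t => swapAt T t y m).card) :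
    Feasible (fun a b => if (a = x ∧ b = y) ∨ (a = y ∧ b = x) then l x y - 2 else l a b) := by
  obtain ⟨hT, hstart, hcount⟩ := hreal
  refine ⟨h, tweak T u u' x y, tweak_tangle hT hxy huu hu' su su', ?_, ?_⟩
  · show tweak T u u' x y 0 = 1
    have hc : ¬(u < 0 ∧ 0 ≤ u') := by omega
    simp only [tweak, if_neg hc]
    exact hstart
  · intro a b hab
    beta_reduce
    rw [swapCount_eq]
    by_cases hax : x = a
    · subst hax
      by_cases hby : y = b
      · subst hby
        rw [if_pos (Or.inl ⟨rfl, rfl⟩), tweak_count_xy hxy huu hu' su su', ← swapCount_eq,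
          hcount x y hxy]
      · have hbx : b ≠ x := Ne.symm hab
        have hby' : b ≠ y := fun hh => hby hh.symm
        rw [if_neg (by rintro (⟨-, hh⟩ | ⟨hh, -⟩); exact hby' hh; exact hxy hh)]
        rw [tweak_count_xm hxy huu hu' su su' hbx hby' (hdrift b hbx hby'), ← swapCount_eq,
          hcount x b hab]
    · have hax' : a ≠ x := fun hh => hax hh.symm
      by_cases hay : y = a
      · subst hay
        by_cases hbx : x = b
        · subst hbx
          rw [if_pos (Or.inr ⟨rfl, rfl⟩)]
          have hc : ((range (h-1)).filter fun t => swapAt (tweak T u u' x y) t y x) =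
              ((range (h-1)).filter fun t => swapAt (tweak T u u' x y) t x y) :=
            Finset.filter_congr (fun t _ => swapAt_comm)
          rw [hc, tweak_count_xy hxy huu hu' su su', ← swapCount_eq, hcount x y hxy]
        · have hbx' : b ≠ x := fun hh => hbx hh.symm
          have hby : b ≠ y := Ne.symm hab
          rw [if_neg (by rintro (⟨hh, -⟩ | ⟨-, hh⟩); exact hxy hh.symm; exact hbx' hh)]
          rw [show tweak T u u' x y = tweak T u u' y x from tweak_comm T u u' x y]
          rw [tweak_count_xm (Ne.symm hxy) huu hu' (swapAt_symm su) (swapAt_symm su') hby hbx'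
            (hdrift b hbx' hby).symm, ← swapCount_eq, hcount y b hab]
      · have hay' : a ≠ y := fun hh => hay hh.symm
        by_cases hbx : x = b
        · subst hbx
          rw [if_neg (by rintro (⟨hh, -⟩ | ⟨hh, -⟩); exact hax' hh; exact hay' hh)]
          have hc1 : ((range (h-1)).filter fun t => swapAt (tweak T u u' x y) t a x) =
              ((range (h-1)).filter fun t => swapAt (tweak T u u' x y) t x a) :=
            Finset.filter_congr (fun t _ => swapAt_comm)
          have hc2 : ((range (h-1)).filter fun t => swapAt T t x a) =
              ((range (h-1)).filter fun t => swapAt T t a x) :=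
            Finset.filter_congr (fun t _ => swapAt_comm)
          rw [hc1, tweak_count_xm hxy huu hu' su su' hax' hay' (hdrift a hax' hay'), hc2,
            ← swapCount_eq, hcount a x hab]
        · by_cases hby : y = b
          · subst hby
            rw [if_neg (by rintro (⟨hh, -⟩ | ⟨hh, -⟩); exact hax' hh; exact hay' hh)]
            have hc1 : ((range (h-1)).filter fun t => swapAt (tweak T u u' x y) t a y) =
                ((range (h-1)).filter fun t => swapAt (tweak T u u' x y) t y a) :=
              Finset.filter_congr (fun t _ => swapAt_comm)
            have hc2 : ((range (h-1)).filter fun t => swapAt T t y a) =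
                ((range (h-1)).filter fun t => swapAt T t a y) :=
              Finset.filter_congr (fun t _ => swapAt_comm)
            rw [hc1, show tweak T u u' x y = tweak T u u' y x from tweak_comm T u u' x y]
            rw [tweak_count_xm (Ne.symm hxy) huu hu' (swapAt_symm su) (swapAt_symm su') hay' hax'
              (hdrift a hax' hay').symm, hc2, ← swapCount_eq, hcount a y hab]
          · have hbx' : b ≠ x := fun hh => hbx hh.symm
            have hby' : b ≠ y := fun hh => hby hh.symm
            rw [if_neg (by rintro (⟨hh, -⟩ | ⟨hh, -⟩); exact hax' hh; exact hay' hh)]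
            rw [tweak_count_other hxy huu su su' hab hax' hay' hbx' hby', ← swapCount_eq,
              hcount a b hab]

/-! ### Mantel's bound via Turán's theorem -/

lemma mantel (G : SimpleGraph (Fin n)) [DecidableRel G.Adj] (hG : G.CliqueFree 3) :
    G.edgeFinset.card ≤ n^2/4 := by
  have tm := SimpleGraph.isTuranMaximal_turanGraph (n := n) (r := 2) (by norm_num)
  have hle := tm.2 hG
  have hdeg : ∀ v : Fin n, (SimpleGraph.turanGraph n 2).degree v =
      (if (v : ℕ) % 2 = 1 then (univ.filter fun w : Fin n => ¬((w : ℕ) % 2 = 1)).card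
       else (univ.filter fun w : Fin n => (w : ℕ) % 2 = 1).card) := by
    intro v
    rw [SimpleGraph.degree, SimpleGraph.neighborFinset_eq_filter]
    split_ifs with hv
    · apply congrArg Finset.card
      apply Finset.filter_congr
      intro w _
      show (v : ℕ) % 2 ≠ (w : ℕ) % 2 ↔ _
      omega
    · apply congrArg Finset.card
      apply Finset.filter_congr
      intro w _
      show (v : ℕ) % 2 ≠ (w : ℕ) % 2 ↔ _
      omega
  have hsum := SimpleGraph.sum_degrees_eq_twice_card_edges (SimpleGraph.turanGraph n 2)
  rw [Finset.sum_congr rfl (fun v _ => hdeg v)] at hsum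
  set c1 := (univ.filter fun w : Fin n => (w : ℕ) % 2 = 1).card with hc1
  set c0 := (univ.filter fun w : Fin n => ¬((w : ℕ) % 2 = 1)).card with hc0
  have hsplit : c1 + c0 = n := by
    rw [hc1, hc0, Finset.card_filter_add_card_filter_not, Finset.card_univ,
      Fintype.card_fin]
  have hval : ∑ v : Fin n, (if (v : ℕ) % 2 = 1 then c0 else c1) = c1 * c0 + c0 * c1 := by
    rw [Finset.sum_ite, Finset.sum_const, Finset.sum_const, smul_eq_mul, smul_eq_mul]
  rw [hval] at hsum
  rw [mul_comm c1 c0] at hsum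
  have h4 : 4 * (c0 * c1) ≤ (c1 + c0)^2 := by
    zify
    nlinarith [sq_nonneg ((c1 : ℤ) - (c0 : ℤ))]
  rw [hsplit] at h4
  have hE : (SimpleGraph.turanGraph n 2).edgeFinset.card * 4 ≤ n^2 := by omega
  have hfin := Nat.mul_le_mul_right 4 hle
  omega

end TangleAux

open TangleAux in
/-- Entries of a minimal feasible list are at most n²/4 + 1. -/
theorem minimal_feasible_upper_bound (n : ℕ) (l : Fin n → Fin n → ℕ)
    (hsym : ∀ i j, l i j = l j i) (hdiag : ∀ i, l i i = 0)
    (hfeas : Feasible l)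
    (hmin : ∀ l' : Fin n → Fin n → ℕ, Feasible l' →
      (∀ i j, l' i j ≤ l i j) →
      (∀ i j, l' i j % 2 = l i j % 2) →
      (∀ i j, 0 < l i j → 0 < l' i j) →
      l' = l) :
    ∀ i j : Fin n, l i j ≤ n ^ 2 / 4 + 1 := by
  classical
  intro i j
  by_contra hgt
  push_neg at hgt
  have hij : i ≠ j := by
    rintro rfl
    rw [hdiag i] at hgt
    omega
  have hn2 : 2 ≤ n := by
    by_contra hh
    push_neg at hh
    interval_cases n
    · exact Fin.elim0 i
    · exact hij (Subsingleton.elim i j)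
  obtain ⟨h, T, hreal⟩ := hfeas
  have hT := hreal.1
  -- dichotomy: a drift-free pair of crossings forces the corresponding entry to be 2
  have dich : ∀ (x y : Fin n) (u u' : ℕ), x ≠ y → u < u' → u' < h - 1 →
      swapAt T u x y → swapAt T u' x y →
      (∀ m, m ≠ x → m ≠ y →
        ((Finset.Ioo u u').filter fun t => swapAt T t x m).card =
        ((Finset.Ioo u u').filter fun t => swapAt T t y m).card) →
      l x y = 2 := by
    intro x y u u' hxy huu hu' su su' hdr
    have hfeas' := surgery hreal hxy huu hu' su su' hdr
    have hl2 : 2 ≤ l x y := by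
      rw [← hreal.2.2 x y hxy, swapCount_eq]
      have hsub : ({u, u'} : Finset ℕ) ⊆
          (range (h-1)).filter fun t => swapAt T t x y := by
        intro t ht
        simp only [Finset.mem_insert, Finset.mem_singleton] at ht
        simp only [Finset.mem_filter, Finset.mem_range]
        rcases ht with rfl | rfl
        · exact ⟨by omega, su⟩
        · exact ⟨by omega, su'⟩
      calc 2 = ({u, u'} : Finset ℕ).card := (Finset.card_pair (by omega)).symm
        _ ≤ _ := Finset.card_le_card hsub
    by_contra hne
    have h3 : 3 ≤ l x y := by omega
    have hle' : ∀ a b, (if (a = x ∧ b = y) ∨ (a = y ∧ b = x) then l x y - 2 else l a b)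
        ≤ l a b := by
      intro a b
      split_ifs with hcond
      · rcases hcond with ⟨ha, hb⟩ | ⟨ha, hb⟩
        · rw [ha, hb]; omega
        · rw [ha, hb, hsym y x]; omega
      · exact le_refl _
    have hpar' : ∀ a b, (if (a = x ∧ b = y) ∨ (a = y ∧ b = x) then l x y - 2 else l a b) % 2
        = l a b % 2 := by
      intro a b
      split_ifs with hcond
      · rcases hcond with ⟨ha, hb⟩ | ⟨ha, hb⟩
        · rw [ha, hb]; omega
        · rw [ha, hb, hsym y x]; omega
      · rfl
    have hpos' : ∀ a b, 0 < l a b →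
        0 < (if (a = x ∧ b = y) ∨ (a = y ∧ b = x) then l x y - 2 else l a b) := by
      intro a b hpos
      split_ifs with hcond
      · omega
      · exact hpos
    have heq := hmin _ hfeas' hle' hpar' hpos'
    have hxyeq := congrFun (congrFun heq x) y
    rw [if_pos (show (x = x ∧ y = y) ∨ (x = y ∧ y = x) from Or.inl ⟨rfl, rfl⟩)] at hxyeq
    omega
  set k := l i j with hkdef
  have hkcard : ((range (h-1)).filter fun t => swapAt T t i j).card = k := by
    rw [← swapCount_eq, hreal.2.2 i j hij]
  set τ := ((range (h-1)).filter fun t => swapAt T t i j).orderEmbOfFin hkcard with hτdef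
  have hτmem : ∀ q : Fin k, τ q ∈ (range (h-1)).filter fun t => swapAt T t i j :=
    fun q => Finset.orderEmbOfFin_mem _ hkcard q
  have hτF : ∀ q : Fin k, τ q < h - 1 ∧ swapAt T (τ q) i j := by
    intro q
    have := hτmem q
    simp only [Finset.mem_filter, Finset.mem_range] at this
    exact this
  have hτmono : ∀ (q q' : Fin k), q.1 < q'.1 → τ q < τ q' := by
    intro q q' hq
    exact τ.strictMono (show q < q' from hq)
  have hτmono' : ∀ (q q' : Fin k), q.1 ≤ q'.1 → τ q ≤ τ q' := by
    intro q q' hq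
    exact τ.monotone (show q ≤ q' from hq)
  have hk3 : 3 ≤ k := by
    have h4 : 4 ≤ n^2 := by
      calc 4 = 2^2 := by norm_num
        _ ≤ n^2 := Nat.pow_le_pow_left hn2 2
    omega
  -- per-gap lock extraction
  have gap : ∀ r : ℕ, ∀ hr1 : r < k, ∀ hr2 : r + 1 < k, ∃ c d : Fin n, c ≠ d ∧ l c d = 2 ∧
      (∃ v, v ∈ Finset.Ioo (τ ⟨r, hr1⟩) (τ ⟨r+1, hr2⟩) ∧ swapAt T v c d) ∧
      (∀ t, t < h - 1 → swapAt T t c d → t ∈ Finset.Ioo (τ ⟨r, hr1⟩) (τ ⟨r+1, hr2⟩)) := by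
    intro r hr1 hr2
    set u := τ ⟨r, hr1⟩ with hudef
    set u' := τ ⟨r+1, hr2⟩ with hu'def
    obtain ⟨huh, husw⟩ := hτF ⟨r, hr1⟩
    obtain ⟨hu'h, hu'sw⟩ := hτF ⟨r+1, hr2⟩
    have huu : u < u' := hτmono ⟨r, hr1⟩ ⟨r+1, hr2⟩ (by show r < r + 1; omega)
    have hnd : ¬ (∀ m, m ≠ i → m ≠ j →
        ((Finset.Ioo u u').filter fun t => swapAt T t i m).card =
        ((Finset.Ioo u u').filter fun t => swapAt T t j m).card) := by
      intro hdr
      have := dich i j u u' hij huu hu'h husw hu'sw hdr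
      omega
    push_neg at hnd
    obtain ⟨m, hmi, hmj, hmne⟩ := hnd
    have hpar := lens_parity hT hij hmi hmj huu (by omega) husw hu'sw
    have hP : ∃ v v' : ℕ, v < v' ∧ v ∈ Finset.Ioo u u' ∧ v' ∈ Finset.Ioo u u' ∧
        ∃ c0 d0 : Fin n, c0 ≠ d0 ∧ swapAt T v c0 d0 ∧ swapAt T v' c0 d0 := by
      have h2 : 2 ≤ ((Finset.Ioo u u').filter fun t => swapAt T t i m).card ∨
                2 ≤ ((Finset.Ioo u u').filter fun t => swapAt T t j m).card := by omega
      rcases h2 with h2 | h2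
      · obtain ⟨v, hv, v', hv', hne⟩ := Finset.one_lt_card.mp
          (show 1 < ((Finset.Ioo u u').filter fun t => swapAt T t i m).card by omega)
        simp only [Finset.mem_filter] at hv hv'
        rcases lt_or_gt_of_ne hne with hlt | hlt
        · exact ⟨v, v', hlt, hv.1, hv'.1, i, m, Ne.symm hmi, hv.2, hv'.2⟩
        · exact ⟨v', v, hlt, hv'.1, hv.1, i, m, Ne.symm hmi, hv'.2, hv.2⟩
      · obtain ⟨v, hv, v', hv', hne⟩ := Finset.one_lt_card.mp
          (show 1 < ((Finset.Ioo u u').filter fun t => swapAt T t j m).card by omega)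
        simp only [Finset.mem_filter] at hv hv'
        rcases lt_or_gt_of_ne hne with hlt | hlt
        · exact ⟨v, v', hlt, hv.1, hv'.1, j, m, Ne.symm hmj, hv.2, hv'.2⟩
        · exact ⟨v', v, hlt, hv'.1, hv.1, j, m, Ne.symm hmj, hv'.2, hv.2⟩
    set P : Finset (ℕ × ℕ) := ((Finset.Ioo u u') ×ˢ (Finset.Ioo u u')).filter
        (fun p => p.1 < p.2 ∧ ∃ c0 d0 : Fin n, c0 ≠ d0 ∧
          swapAt T p.1 c0 d0 ∧ swapAt T p.2 c0 d0) with hPdef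
    have hPne : P.Nonempty := by
      obtain ⟨v, v', hlt, hvI, hv'I, c0, d0, hcd0, s1, s2⟩ := hP
      exact ⟨(v, v'), by
        simp only [hPdef, Finset.mem_filter, Finset.mem_product]
        exact ⟨⟨hvI, hv'I⟩, hlt, c0, d0, hcd0, s1, s2⟩⟩
    obtain ⟨p, hpP, hpmin⟩ := P.exists_min_image (fun p => p.2 - p.1) hPne
    obtain ⟨v, v'⟩ := p
    simp only [hPdef, Finset.mem_filter, Finset.mem_product, Finset.mem_Ioo] at hpP
    obtain ⟨⟨hvI, hv'I⟩, hvv, c, d, hcd, sv, sv'⟩ := hpP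
    have hv'h : v' < h - 1 := by omega
    have hdrift2 : ∀ m', m' ≠ c → m' ≠ d →
        ((Finset.Ioo v v').filter fun t => swapAt T t c m').card =
        ((Finset.Ioo v v').filter fun t => swapAt T t d m').card := by
      intro m' h1 h2
      have hle1 : ∀ (e f : Fin n), e ≠ f →
          ((Finset.Ioo v v').filter fun t => swapAt T t e f).card ≤ 1 := by
        intro e f hef
        by_contra hgt2
        push_neg at hgt2
        obtain ⟨s1, hs1, s2, hs2, hne12⟩ := Finset.one_lt_card.mp
          (show 1 < ((Finset.Ioo v v').filter fun t => swapAt T t e f).card by omega)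
        simp only [Finset.mem_filter, Finset.mem_Ioo] at hs1 hs2
        rcases lt_or_gt_of_ne hne12 with hlt | hlt
        · have hmemP : (s1, s2) ∈ P := by
            simp only [hPdef, Finset.mem_filter, Finset.mem_product, Finset.mem_Ioo]
            exact ⟨⟨⟨by omega, by omega⟩, by omega, by omega⟩, hlt, e, f, hef, hs1.2, hs2.2⟩
          have := hpmin _ hmemP
          simp only at this
          omega
        · have hmemP : (s2, s1) ∈ P := by
            simp only [hPdef, Finset.mem_filter, Finset.mem_product, Finset.mem_Ioo]
            exact ⟨⟨⟨by omega, by omega⟩, by omega, by omega⟩, hlt, e, f, hef, hs2.2, hs1.2⟩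
          have := hpmin _ hmemP
          simp only at this
          omega
      have hpar2 := lens_parity hT hcd h1 h2 hvv (by omega) sv sv'
      have ha := hle1 c m' (Ne.symm h1)
      have hb := hle1 d m' (Ne.symm h2)
      omega
    have hlcd := dich c d v v' hcd hvv (by omega) sv sv' hdrift2
    have hcard2 : ((range (h-1)).filter fun t => swapAt T t c d).card = 2 := by
      rw [← swapCount_eq, hreal.2.2 c d hcd, hlcd]
    have hsub2 : ({v, v'} : Finset ℕ) ⊆ (range (h-1)).filter fun t => swapAt T t c d := by
      intro t ht
      simp only [Finset.mem_insert, Finset.mem_singleton] at ht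
      simp only [Finset.mem_filter, Finset.mem_range]
      rcases ht with rfl | rfl
      · exact ⟨by omega, sv⟩
      · exact ⟨by omega, sv'⟩
    have hset2 : ({v, v'} : Finset ℕ) = (range (h-1)).filter fun t => swapAt T t c d := by
      apply Finset.eq_of_subset_of_card_le hsub2
      rw [hcard2, Finset.card_pair (show v ≠ v' by omega)]
    refine ⟨c, d, hcd, hlcd, ⟨v, by simp only [Finset.mem_Ioo]; omega, sv⟩, ?_⟩
    intro t ht hswt
    have htm : t ∈ ({v, v'} : Finset ℕ) := by
      rw [hset2]
      simp only [Finset.mem_filter, Finset.mem_range]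
      exact ⟨ht, hswt⟩
    simp only [Finset.mem_insert, Finset.mem_singleton] at htm
    simp only [Finset.mem_Ioo]
    rcases htm with rfl | rfl
    · omega
    · omega
  choose c d hcd hl2 hvex hconf using gap
  -- the lock graph
  set G : SimpleGraph (Fin n) := SimpleGraph.fromEdgeSet
    {e | ∃ (r : ℕ) (hr1 : r < k) (hr2 : r + 1 < k), e = s(c r hr1 hr2, d r hr1 hr2)}
    with hGdef
  haveI : DecidableRel G.Adj := Classical.decRel _
  -- gap separation
  have gapsep : ∀ (r r' : ℕ) (hr1 : r < k) (hr2 : r + 1 < k) (hr1' : r' < k)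
      (hr2' : r' + 1 < k), r ≠ r' → ∀ z, z ∈ Finset.Ioo (τ ⟨r, hr1⟩) (τ ⟨r+1, hr2⟩) →
      (z ≤ τ ⟨r', hr1'⟩ ∨ τ ⟨r'+1, hr2'⟩ ≤ z) := by
    intro r r' hr1 hr2 hr1' hr2' hne z hz
    simp only [Finset.mem_Ioo] at hz
    rcases lt_or_gt_of_ne hne with hlt | hlt
    · left
      have : τ ⟨r+1, hr2⟩ ≤ τ ⟨r', hr1'⟩ := hτmono' _ _ (by show r + 1 ≤ r'; omega)
      omega
    · right
      have : τ ⟨r'+1, hr2'⟩ ≤ τ ⟨r, hr1⟩ := hτmono' _ _ (by show r' + 1 ≤ r; omega)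
      omega
  -- transfer of lock properties along Sym2 equality
  have transfer : ∀ (a b : Fin n) (r : ℕ) (hr1 : r < k) (hr2 : r + 1 < k),
      s(a, b) = s(c r hr1 hr2, d r hr1 hr2) →
      (l a b = 2) ∧
      (∃ v, v ∈ Finset.Ioo (τ ⟨r, hr1⟩) (τ ⟨r+1, hr2⟩) ∧ swapAt T v a b) ∧
      (∀ t, t < h - 1 → swapAt T t a b → t ∈ Finset.Ioo (τ ⟨r, hr1⟩) (τ ⟨r+1, hr2⟩)) := by
    intro a b r hr1 hr2 he
    rw [Sym2.eq_iff] at he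
    rcases he with ⟨rfl, rfl⟩ | ⟨rfl, rfl⟩
    · exact ⟨hl2 r hr1 hr2, hvex r hr1 hr2, hconf r hr1 hr2⟩
    · obtain ⟨v, hvI, hvs⟩ := hvex r hr1 hr2
      refine ⟨by rw [hsym]; exact hl2 r hr1 hr2, ⟨v, hvI, swapAt_symm hvs⟩, ?_⟩
      intro t ht hswt
      exact hconf r hr1 hr2 t ht (swapAt_symm hswt)
  -- order stability outside the lock gap
  have stable : ∀ (a b : Fin n), a ≠ b → ∀ (r : ℕ) (hr1 : r < k) (hr2 : r + 1 < k),
      (∀ t, t < h - 1 → swapAt T t a b → t ∈ Finset.Ioo (τ ⟨r, hr1⟩) (τ ⟨r+1, hr2⟩)) →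
      l a b = 2 →
      ∀ z, z < h - 1 → (z ≤ τ ⟨r, hr1⟩ ∨ τ ⟨r+1, hr2⟩ ≤ z) →
      (((T z b : ℤ) < (T z a : ℤ)) ↔ ((T 0 b : ℤ) < (T 0 a : ℤ))) := by
    intro a b hab r hr1 hr2 hconf' hlab z hz hside
    have hcnt := parity_count hT hab (a := 0) z (Nat.zero_le z) (by omega)
    have hFab : ((range (h-1)).filter fun t => swapAt T t a b).card = 2 := by
      rw [← swapCount_eq, hreal.2.2 a b hab, hlab]
    have heven : ((Finset.Ico 0 z).filter fun t => swapAt T t a b).card % 2 = 0 := by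
      rcases hside with hside | hside
      · have hempty : (Finset.Ico 0 z).filter (fun t => swapAt T t a b) = ∅ := by
          rw [Finset.filter_eq_empty_iff]
          intro t ht hsw
          simp only [Finset.mem_Ico] at ht
          have := hconf' t (by omega) hsw
          simp only [Finset.mem_Ioo] at this
          omega
        rw [hempty]
        simp
      · have hfull : (Finset.Ico 0 z).filter (fun t => swapAt T t a b) =
            (range (h-1)).filter fun t => swapAt T t a b := by
          ext t
          simp only [Finset.mem_filter, Finset.mem_Ico, Finset.mem_range]
          constructor
          · rintro ⟨⟨-, htz⟩, hsw⟩
            exact ⟨by omega, hsw⟩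
          · rintro ⟨hth, hsw⟩
            have := hconf' t hth hsw
            simp only [Finset.mem_Ioo] at this
            exact ⟨⟨Nat.zero_le t, by omega⟩, hsw⟩
        rw [hfull, hFab]
    exact (hcnt.mp heven).symm
  -- lock pairs are pairwise distinct across gaps
  have hinj2 : ∀ (r r' : ℕ) (hr1 : r < k) (hr2 : r + 1 < k) (hr1' : r' < k)
      (hr2' : r' + 1 < k), r ≠ r' →
      s(c r hr1 hr2, d r hr1 hr2) ≠ s(c r' hr1' hr2', d r' hr1' hr2') := by
    intro r r' hr1 hr2 hr1' hr2' hne heq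
    obtain ⟨v, hvI, hvs⟩ := hvex r hr1 hr2
    have hvs' : swapAt T v (c r' hr1' hr2') (d r' hr1' hr2') := by
      rw [Sym2.eq_iff] at heq
      rcases heq with ⟨h1, h2⟩ | ⟨h1, h2⟩
      · rw [← h1, ← h2]; exact hvs
      · rw [← h2, ← h1]; exact swapAt_symm hvs
    have hvh : v < h - 1 := by
      have := (hτF ⟨r+1, hr2⟩).1
      simp only [Finset.mem_Ioo] at hvI
      omega
    have hmem2 := hconf r' hr1' hr2' v hvh hvs'
    have hsep := gapsep r r' hr1 hr2 hr1' hr2' hne v hvI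
    simp only [Finset.mem_Ioo] at hmem2
    omega
  -- triangle-freeness of the lock graph
  have hcf : G.CliqueFree 3 := by
    intro s hs
    rw [SimpleGraph.is3Clique_iff] at hs
    obtain ⟨a, b, w, hab, haw, hbw, -⟩ := hs
    have hab' : a ≠ b := hab.ne
    have haw' : a ≠ w := haw.ne
    have hbw' : b ≠ w := hbw.ne
    have hAB : ∃ (r : ℕ) (hr1 : r < k) (hr2 : r + 1 < k),
        s(a, b) = s(c r hr1 hr2, d r hr1 hr2) := by
      have h2 := hab
      rw [hGdef, SimpleGraph.fromEdgeSet_adj] at h2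
      exact h2.1
    have hBW : ∃ (r : ℕ) (hr1 : r < k) (hr2 : r + 1 < k),
        s(b, w) = s(c r hr1 hr2, d r hr1 hr2) := by
      have h2 := hbw
      rw [hGdef, SimpleGraph.fromEdgeSet_adj] at h2
      exact h2.1
    have hAW : ∃ (r : ℕ) (hr1 : r < k) (hr2 : r + 1 < k),
        s(a, w) = s(c r hr1 hr2, d r hr1 hr2) := by
      have h2 := haw
      rw [hGdef, SimpleGraph.fromEdgeSet_adj] at h2
      exact h2.1
    obtain ⟨r1, h11, h12, he1⟩ := hAB
    obtain ⟨r2, h21, h22, he2⟩ := hBW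
    obtain ⟨r3, h31, h32, he3⟩ := hAW
    obtain ⟨hl1, ⟨z1, hz1I, sz1⟩, hc1⟩ := transfer a b r1 h11 h12 he1
    obtain ⟨hl2', ⟨z2, hz2I, sz2⟩, hc2⟩ := transfer b w r2 h21 h22 he2
    obtain ⟨hl3, ⟨z3, hz3I, sz3⟩, hc3⟩ := transfer a w r3 h31 h32 he3
    have h12ne : r1 ≠ r2 := by
      rintro rfl
      have hbad : s(a, b) = s(b, w) := he1.trans he2.symm
      rw [Sym2.eq_iff] at hbad
      rcases hbad with ⟨h1, h2⟩ | ⟨h1, h2⟩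
      · exact hab' h1
      · exact haw' h1
    have h13ne : r1 ≠ r3 := by
      rintro rfl
      have hbad : s(a, b) = s(a, w) := he1.trans he3.symm
      rw [Sym2.eq_iff] at hbad
      rcases hbad with ⟨h1, h2⟩ | ⟨h1, h2⟩
      · exact hbw' h2
      · exact haw' h1
    have h23ne : r2 ≠ r3 := by
      rintro rfl
      have hbad : s(b, w) = s(a, w) := he2.trans he3.symm
      rw [Sym2.eq_iff] at hbad
      rcases hbad with ⟨h1, h2⟩ | ⟨h1, h2⟩
      · exact hab' h1.symm
      · exact hbw' h1
    have hz1h : z1 < h - 1 := by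
      have := (hτF ⟨r1+1, h12⟩).1
      simp only [Finset.mem_Ioo] at hz1I
      omega
    have hz2h : z2 < h - 1 := by
      have := (hτF ⟨r2+1, h22⟩).1
      simp only [Finset.mem_Ioo] at hz2I
      omega
    have hz3h : z3 < h - 1 := by
      have := (hτF ⟨r3+1, h32⟩).1
      simp only [Finset.mem_Ioo] at hz3I
      omega
    -- stable relative orders at the three swap times
    have A2 := stable a b hab' r1 h11 h12 hc1 hl1 z2 hz2h
      (gapsep r2 r1 h21 h22 h11 h12 (Ne.symm h12ne) z2 hz2I)
    have C2 := stable a w haw' r3 h31 h32 hc3 hl3 z2 hz2h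
      (gapsep r2 r3 h21 h22 h31 h32 h23ne z2 hz2I)
    have B1 := stable b w hbw' r2 h21 h22 hc2 hl2' z1 hz1h
      (gapsep r1 r2 h11 h12 h21 h22 h12ne z1 hz1I)
    have C1 := stable a w haw' r3 h31 h32 hc3 hl3 z1 hz1h
      (gapsep r1 r3 h11 h12 h31 h32 h13ne z1 hz1I)
    have A3 := stable a b hab' r1 h11 h12 hc1 hl1 z3 hz3h
      (gapsep r3 r1 h31 h32 h11 h12 (Ne.symm h13ne) z3 hz3I)
    have B3 := stable b w hbw' r2 h21 h22 hc2 hl2' z3 hz3h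
      (gapsep r3 r2 h31 h32 h21 h22 (Ne.symm h23ne) z3 hz3I)
    -- adjacency at the swap times
    have had1 := (adj_at_swap hT (by omega) hab' sz1).2
    have had2 := (adj_at_swap hT (by omega) hbw' sz2).2
    have had3 := (adj_at_swap hT (by omega) haw' sz3).2
    -- distinctness
    have d1 : ((T z1 w : ℤ)) ≠ ((T z1 a : ℤ)) := pos_ne (Ne.symm haw')
    have d2 : ((T z1 w : ℤ)) ≠ ((T z1 b : ℤ)) := pos_ne (Ne.symm hbw')
    have d3 : ((T z2 a : ℤ)) ≠ ((T z2 b : ℤ)) := pos_ne hab'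
    have d4 : ((T z2 a : ℤ)) ≠ ((T z2 w : ℤ)) := pos_ne haw'
    have d5 : ((T z3 b : ℤ)) ≠ ((T z3 a : ℤ)) := pos_ne (Ne.symm hab')
    have d6 : ((T z3 b : ℤ)) ≠ ((T z3 w : ℤ)) := pos_ne hbw'
    omega
  -- counting: at least k - 1 distinct edges
  have hq1' : ∀ q : Fin (k-1), (q : ℕ) < k := fun q => Nat.lt_of_lt_of_le q.2 (Nat.sub_le k 1)
  have hq2' : ∀ q : Fin (k-1), (q : ℕ) + 1 < k := fun q => by have := q.2; omega
  have hcount : k - 1 ≤ G.edgeFinset.card := by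
    have hle := Finset.card_le_card_of_injOn
      (s := (Finset.univ : Finset (Fin (k-1)))) (t := G.edgeFinset)
      (fun q : Fin (k-1) => s(c q.1 (hq1' q) (hq2' q), d q.1 (hq1' q) (hq2' q)))
      (fun q _ => by
        rw [Finset.mem_coe, SimpleGraph.mem_edgeFinset, hGdef, SimpleGraph.edgeSet_fromEdgeSet]
        refine ⟨⟨q.1, hq1' q, hq2' q, rfl⟩, ?_⟩
        simp only [Set.mem_setOf_eq, Sym2.mem_diagSet, Sym2.isDiag_iff_proj_eq]
        exact hcd q.1 (hq1' q) (hq2' q))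
      (fun q _ q' _ heqq => by
        by_contra hneq
        exact hinj2 q.1 q'.1 (hq1' q) (hq2' q) (hq1' q') (hq2' q')
          (fun hh => hneq (Fin.ext hh)) heqq)
    simpa using hle
  have hman := mantel G hcf
  have hfinal : k - 1 ≤ n^2/4 := by
    refine le_trans hcount ?_
    convert hman
    rfl
  omega
end

section
/- Every feasible list is consistent: if there exists a tangle ⟨id_n = π_1, …, π_h⟩ realizing L, then the map id_n L is a permutation of [n]. -/
/-!
Let `ρ` be the last permutation of a tangle realizing `L`. Two adjacent permutations differ by
disjoint swaps of neighbouring positions, so the relative order of two wires changes exactly at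
the steps where they swap; hence `l i j` is odd iff `ρ` inverts the pair `i, j`. The position
`ρ i` then equals `i`, plus the number of wires `j > i` that end up below `i`, minus the number of
wires `j < i` that end up above it, which is the formula defining `id_n L`.
-/

open Finset

section

variable {n : ℕ}

theorem Adjacent.swap_iff_order_flips {π σ : Equiv.Perm (Fin n)} (hadj : Adjacent π σ)
    {i j : Fin n} (hij : i ≠ j) :
    (π i = σ j ∧ π j = σ i) ↔ ¬(π i < π j ↔ σ i < σ j) := by
  have hi := hadj i
  have hj := hadj j
  have hπ : π i ≠ π j := π.injective.ne hij
  have hσ : σ i ≠ σ j := σ.injective.ne hij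
  simp only [Fin.lt_def, Fin.ext_iff, ne_eq] at hi hj hπ hσ ⊢
  omega

theorem odd_card_swaps_iff_order_flips {T : ℕ → Equiv.Perm (Fin n)} {t : ℕ}
    (hT : ∀ s < t, Adjacent (T s) (T (s + 1))) {i j : Fin n} (hij : i ≠ j) :
    Odd #{s ∈ range t | T s i = T (s + 1) j ∧ T s j = T (s + 1) i} ↔
      ¬(T t i < T t j ↔ T 0 i < T 0 j) := by
  induction t with
  | zero => simp
  | succ t ih =>
    have hflip := (hT t t.lt_succ_self).swap_iff_order_flips hij
    rw [range_add_one, filter_insert]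
    split_ifs with hswap
    · rw [card_insert_of_notMem (by simp), Nat.odd_add_one,
        ih fun s hs => hT s (hs.trans t.lt_succ_self)]
      have := hflip.mp hswap
      tauto
    · rw [ih fun s hs => hT s (hs.trans t.lt_succ_self), not_not.mp (mt hflip.mpr hswap)]

theorem IsTangle.odd_swapCount_iff {T : ℕ → Equiv.Perm (Fin n)} {h : ℕ}
    (hT : IsTangle T h) {i j : Fin n} (hij : i ≠ j) :
    Odd (SwapCount T h i j) ↔ ¬(T (h - 1) i < T (h - 1) j ↔ T 0 i < T 0 j) :=
  odd_card_swaps_iff_order_flips (fun s hs => hT.2 s (by omega)) hij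

theorem Equiv.Perm.card_filter_apply_lt_s12 (ρ : Equiv.Perm (Fin n)) (i : Fin n) :
    #{j | ρ j < ρ i} = ρ i := by
  have : ({j | ρ j < ρ i} : Finset (Fin n)) = (Iio (ρ i)).map ρ.symm.toEmbedding := by
    ext j
    simp
  rw [this, card_map, Fin.card_Iio]

theorem Equiv.Perm.coe_apply_eq_add_card_sub_card (ρ : Equiv.Perm (Fin n)) (i : Fin n) :
    (i : ℤ) + #{j | i < j ∧ ρ j < ρ i} - #{j | j < i ∧ ρ i < ρ j} = ρ i := by
  have hbelow : ((#{j | ρ j < ρ i} : ℕ) : ℤ) - #{j | j < i} =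
      #{j | i < j ∧ ρ j < ρ i} - #{j | j < i ∧ ρ i < ρ j} := by
    simp only [natCast_card_filter, ← sum_sub_distrib]
    refine sum_congr rfl fun j _ => ?_
    by_cases hji : j = i
    · simp [hji]
    · have := ρ.injective.ne hji
      grind
  have hi : #{j | j < i} = i := by
    rw [filter_gt_eq_Iio, Fin.card_Iio]
  rw [ρ.card_filter_apply_lt_s12, hi] at hbelow
  omega

end

/-- Every feasible list is consistent. -/
theorem feasible_consistent (n : ℕ) (l : Fin n → Fin n → ℕ) (hfeas : Feasible l) :
    Consistent l := by
  obtain ⟨h, T, hT, hT0, hl⟩ := hfeas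
  set ρ := T (h - 1)
  refine ⟨ρ, fun i => ?_⟩
  have hodd : ∀ j, i ≠ j → (Odd (l i j) ↔ ¬(ρ i < ρ j ↔ i < j)) := fun j hij => by
    rw [← hl i j hij, hT.odd_swapCount_iff hij, hT0, Equiv.Perm.one_apply, Equiv.Perm.one_apply]
  have hne : ∀ j, i ≠ j → ρ i ≠ ρ j := fun _ => ρ.injective.ne
  have habove : #{j | i < j ∧ Odd (l i j)} = #{j | i < j ∧ ρ j < ρ i} :=
    congrArg card <| filter_congr fun j _ => by grind
  have hbelow : #{j | j < i ∧ Odd (l i j)} = #{j | j < i ∧ ρ i < ρ j} :=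
    congrArg card <| filter_congr fun j _ => by grind
  rw [habove, hbelow, ρ.coe_apply_eq_add_card_sub_card]
end
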